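/- arXiv:2009.02006 — 11 statements merged into one kernel-verified Lean document; each statement's English description precedes it below -/
import Mathlib

section
/- Let N ≥ 1 and let x be a root of H_N. Then x/2 = Σ_{y ∈ roots(H_N), y ≠ x} 1/(x − y), where the sum runs over the remaining N − 1 roots of H_N. -/
noncomputable def hermiteR (k : ℕ) : Polynomial ℝ :=
  (Polynomial.hermite k).map (Int.castRingHom ℝ)

/-! At a root `x` of `H_N`, the differential equation `H_N'' = X H_N' - N H_N` gives
`H_N''(x) = x H_N'(x)`. If `H_N` has `N` simple real roots, then `H_N = (X - x) Q` with
`Q = ∏_{y ≠ x} (X - y)`, so `H_N'(x) = Q(x) ≠ 0` and `H_N''(x) = 2 Q'(x) = 2 Q(x) ∑_{y ≠ x} 1/(x - y)`.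

The roots are real and simple because `H_n(x) e^{-x²/2}` is, up to sign, the `n`-th derivative of
the Gaussian. It tends to `0` at `±∞` and vanishes at the distinct roots of `H_n`, so Rolle's
theorem, applied between consecutive roots and on the two unbounded intervals, produces one more
distinct zero of its derivative, i.e. root of `H_{n+1}`. -/

open Polynomial Filter Set Topology
open scoped ContDiff

theorem exists_hasDerivAt_eq_zero_Ioi {f f' : ℝ → ℝ} {a l : ℝ}
    (hfa : Tendsto f (𝓝[>] a) (𝓝 l)) (hf_top : Tendsto f atTop (𝓝 l))
    (hff' : ∀ x ∈ Ioi a, HasDerivAt f (f' x) x) : ∃ c ∈ Ioi a, f' c = 0 := by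
  -- `t ↦ a - log t` maps `(0, 1)` onto `(a, ∞)`, so Rolle's theorem on `(0, 1)` applies.
  have h_mem : ∀ t ∈ Ioo (0 : ℝ) 1, a - Real.log t ∈ Ioi a := fun t ht => by
    rw [mem_Ioi]; linarith [Real.log_neg ht.1 ht.2]
  have h_zero : Tendsto (fun t => a - Real.log t) (𝓝[>] 0) atTop :=
    tendsto_atTop_add_const_left _ a (tendsto_neg_atBot_atTop.comp Real.tendsto_log_nhdsGT_zero)
  have h_one : Tendsto (fun t => a - Real.log t) (𝓝[<] 1) (𝓝[>] a) := by
    refine tendsto_nhdsWithin_iff.2 ⟨?_, ?_⟩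
    · have : ContinuousAt (fun t => a - Real.log t) 1 :=
        continuousAt_const.sub (Real.continuousAt_log one_ne_zero)
      simpa using this.tendsto.mono_left nhdsWithin_le_nhds
    · filter_upwards [Ioo_mem_nhdsLT zero_lt_one] with t ht using h_mem t ht
  obtain ⟨t, ht, hderiv⟩ := exists_hasDerivAt_eq_zero' zero_lt_one
    (hf_top.comp h_zero) (hfa.comp h_one) fun t ht =>
      (hff' _ (h_mem t ht)).comp t ((Real.hasDerivAt_log ht.1.ne').const_sub a)
  exact ⟨_, h_mem t ht, by simpa [ht.1.ne'] using hderiv⟩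

theorem exists_hasDerivAt_eq_zero_Iio {f f' : ℝ → ℝ} {a l : ℝ}
    (hfa : Tendsto f (𝓝[<] a) (𝓝 l)) (hf_bot : Tendsto f atBot (𝓝 l))
    (hff' : ∀ x ∈ Iio a, HasDerivAt f (f' x) x) : ∃ c ∈ Iio a, f' c = 0 := by
  obtain ⟨c, hc, hderiv⟩ := exists_hasDerivAt_eq_zero_Ioi (f := fun x => f (-x))
    (f' := fun x => -f' (-x)) (a := -a) (hfa.comp tendsto_neg_nhdsGT_neg)
    (hf_bot.comp tendsto_neg_atTop_atBot) fun x hx => by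
      simpa [Function.comp_def] using
        (hff' (-x) (mem_Iio.2 (neg_lt.1 hx))).comp x (hasDerivAt_neg x)
  exact ⟨-c, mem_Iio.2 (neg_lt.1 hc), neg_eq_zero.1 hderiv⟩

theorem card_lt_card_of_hasDerivAt_of_tendsto {f f' : ℝ → ℝ} {l : ℝ}
    (hff' : ∀ x, HasDerivAt f (f' x) x) (hf_top : Tendsto f atTop (𝓝 l))
    (hf_bot : Tendsto f atBot (𝓝 l)) {s t : Finset ℝ} (hs : s.Nonempty)
    (hfs : ∀ x ∈ s, f x = l) (ht : ∀ x, f' x = 0 → x ∈ t) : s.card < t.card := by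
  set m := s.min' hs
  set M := s.max' hs
  have hf_nhds (x : ℝ) (hx : x ∈ s) : Tendsto f (𝓝 x) (𝓝 l) :=
    hfs x hx ▸ (hff' x).continuousAt.tendsto
  obtain ⟨c₀, hc₀, hc₀t⟩ := exists_hasDerivAt_eq_zero_Iio
    ((hf_nhds m (s.min'_mem hs)).mono_left nhdsWithin_le_nhds) hf_bot fun x _ => hff' x
  obtain ⟨c₁, hc₁, hc₁t⟩ := exists_hasDerivAt_eq_zero_Ioi
    ((hf_nhds M (s.max'_mem hs)).mono_left nhdsWithin_le_nhds) hf_top fun x _ => hff' x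
  set inner := t.filter (· ∈ Ioo m M)
  have h_inner : s.card ≤ inner.card + 1 := by
    refine Finset.card_le_of_interleaved fun x hx y hy hxy _ => ?_
    obtain ⟨z, hz, hz'⟩ := exists_hasDerivAt_eq_zero hxy
      (fun z _ => (hff' z).continuousAt.continuousWithinAt)
      ((hfs x hx).trans (hfs y hy).symm) fun z _ => hff' z
    exact ⟨z, Finset.mem_filter.2 ⟨ht z hz', s.min'_le x hx |>.trans_lt hz.1,
      hz.2.trans_le (s.le_max' y hy)⟩, hz⟩
  have hc₀c₁ : c₀ < c₁ := hc₀.trans_le (s.min'_le_max' hs) |>.trans hc₁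
  calc s.card < (insert c₀ (insert c₁ inner)).card := by
        rw [Finset.card_insert_of_notMem, Finset.card_insert_of_notMem]
        · omega
        · exact fun h => lt_asymm (Finset.mem_filter.1 h).2.2 hc₁
        · rw [Finset.mem_insert, not_or]
          exact ⟨hc₀c₁.ne, fun h => lt_asymm (Finset.mem_filter.1 h).2.1 hc₀⟩
    _ ≤ t.card := Finset.card_le_card <| Finset.insert_subset (ht c₀ hc₀t) <|
        Finset.insert_subset (ht c₁ hc₁t) (Finset.filter_subset _ _)

namespace Polynomial

theorem tendsto_eval_mul_exp_neg_sq_atTop (p : ℝ[X]) :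
    Tendsto (fun x => p.eval x * Real.exp (-(x ^ 2 / 2))) atTop (𝓝 0) := by
  have h_exp : Tendsto (fun x : ℝ => Real.exp (x - x ^ 2 / 2)) atTop (𝓝 0) := by
    refine Real.tendsto_exp_atBot.comp ?_
    have : Tendsto (fun x : ℝ => x * (1 - x / 2)) atTop atBot :=
      tendsto_id.atTop_mul_atBot₀ <| tendsto_atBot_add_const_left _ 1 <|
        tendsto_neg_atTop_atBot.comp (tendsto_id.atTop_div_const two_pos) |>.congr fun x => by simp
    exact this.congr fun x => by ring
  simpa [div_mul_eq_mul_div, mul_div_assoc, ← Real.exp_sub] using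
    p.tendsto_div_exp_atTop.mul h_exp

theorem tendsto_eval_mul_exp_neg_sq_atBot (p : ℝ[X]) :
    Tendsto (fun x => p.eval x * Real.exp (-(x ^ 2 / 2))) atBot (𝓝 0) := by
  simpa [Function.comp_def] using
    (p.comp (-X)).tendsto_eval_mul_exp_neg_sq_atTop.comp tendsto_neg_atBot_atTop

variable {K : Type*} [Field K]

theorem eval_derivative_prod_X_sub_C_of_notMem {s : Multiset K} {x : K} (hx : x ∉ s) :
    eval x (derivative (s.map fun y => X - C y).prod) =
      (s.map fun y => 1 / (x - y)).sum * eval x (s.map fun y => X - C y).prod := by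
  induction s using Multiset.induction_on with
  | empty => simp
  | cons a s ih =>
    rw [Multiset.mem_cons, not_or] at hx
    have hxa : x - a ≠ 0 := sub_ne_zero.2 hx.1
    simp only [Multiset.map_cons, Multiset.prod_cons, Multiset.sum_cons, derivative_mul,
      derivative_sub, derivative_X, derivative_C, eval_add, eval_mul, eval_sub, eval_X, eval_C,
      eval_one, eval_zero, ih hx.2]
    field_simp
    ring

theorem Splits.eval_derivative_derivative_of_nodup [DecidableEq K] {f : K[X]} (hf : f.Splits)
    (hm : f.Monic) (hnd : f.roots.Nodup) {x : K} (hx : x ∈ f.roots) :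
    eval x (derivative (derivative f)) =
      2 * ((f.roots.erase x).map fun y => 1 / (x - y)).sum * eval x (derivative f) := by
  set s := f.roots.erase x
  have hxs : x ∉ s := hnd.notMem_erase
  have hfx : f = (X - C x) * (s.map fun y => X - C y).prod := by
    rw [← Multiset.prod_cons, ← Multiset.map_cons (fun y => X - C y), Multiset.cons_erase hx]
    exact hf.eq_prod_roots_of_monic hm
  rw [hfx]
  simp only [derivative_mul, derivative_add, derivative_sub, derivative_X, derivative_C, sub_zero,
    one_mul, zero_mul, eval_add, eval_mul, eval_sub, eval_X, eval_C, sub_self,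
    eval_derivative_prod_X_sub_C_of_notMem hxs]
  ring

theorem derivative_hermite_succ (n : ℕ) :
    derivative (hermite (n + 1)) = (n + 1 : ℤ[X]) * hermite n := by
  induction n with
  | zero => simp [hermite_zero]
  | succ n ih =>
    rw [hermite_succ (n + 1), derivative_sub, derivative_mul, derivative_X, ih, derivative_mul]
    simp only [derivative_add, derivative_natCast, derivative_one]
    push_cast
    linear_combination -(n + 1 : ℤ[X]) * hermite_succ n

theorem derivative_derivative_hermite (n : ℕ) :
    derivative (derivative (hermite n)) = X * derivative (hermite n) - (n : ℤ[X]) * hermite n := by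
  cases n with
  | zero => simp
  | succ n =>
    rw [derivative_hermite_succ, derivative_mul]
    simp only [derivative_add, derivative_natCast, derivative_one]
    push_cast
    linear_combination (n + 1 : ℤ[X]) * hermite_succ n

end Polynomial

theorem aeval_hermite_eq_eval_hermiteR (n : ℕ) (x : ℝ) :
    aeval x (hermite n) = eval x (hermiteR n) := by
  rw [aeval_def, hermiteR, eval_map]
  rfl

theorem monic_hermiteR (n : ℕ) : (hermiteR n).Monic := (hermite_monic n).map _

theorem natDegree_hermiteR (n : ℕ) : (hermiteR n).natDegree = n := by
  rw [hermiteR, natDegree_map_eq_of_injective (RingHom.injective_int _), natDegree_hermite]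

theorem eval_derivative_derivative_hermiteR_of_isRoot {n : ℕ} {x : ℝ}
    (hx : (hermiteR n).IsRoot x) :
    eval x (derivative (derivative (hermiteR n))) = x * eval x (derivative (hermiteR n)) := by
  rw [IsRoot.def, hermiteR] at hx
  simp only [hermiteR, derivative_map, derivative_derivative_hermite, Polynomial.map_sub,
    Polynomial.map_mul, map_X, Polynomial.map_natCast, eval_sub, eval_mul, eval_X, eval_natCast,
    hx]
  ring

theorem iterate_deriv_gaussian_eq (n : ℕ) (x : ℝ) :
    deriv^[n] (fun y => Real.exp (-(y ^ 2 / 2))) x =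
      eval x (C ((-1) ^ n) * hermiteR n) * Real.exp (-(x ^ 2 / 2)) := by
  rw [deriv_gaussian_eq_hermite_mul_gaussian, aeval_hermite_eq_eval_hermiteR, eval_mul, eval_C]

theorem iterate_deriv_gaussian_eq_zero_iff {n : ℕ} {x : ℝ} :
    deriv^[n] (fun y => Real.exp (-(y ^ 2 / 2))) x = 0 ↔ (hermiteR n).IsRoot x := by
  simp [iterate_deriv_gaussian_eq, IsRoot.def, Real.exp_ne_zero]

theorem hasDerivAt_iterate_deriv_gaussian (n : ℕ) (x : ℝ) :
    HasDerivAt (deriv^[n] fun y => Real.exp (-(y ^ 2 / 2)))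
      (deriv^[n + 1] (fun y => Real.exp (-(y ^ 2 / 2))) x) x := by
  have : ContDiff ℝ ∞ fun y : ℝ => Real.exp (-(y ^ 2 / 2)) := by fun_prop
  rw [Function.iterate_succ_apply']
  exact ((this.iterate_deriv n).differentiable (by simp)).differentiableAt.hasDerivAt

theorem card_roots_toFinset_hermiteR_lt {n : ℕ} (hn : (hermiteR n).roots.toFinset.Nonempty) :
    (hermiteR n).roots.toFinset.card < (hermiteR (n + 1)).roots.toFinset.card := by
  refine card_lt_card_of_hasDerivAt_of_tendsto (l := 0) (hasDerivAt_iterate_deriv_gaussian n)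
    ?_ ?_ hn (fun x hx => ?_) fun x hx => ?_
  · rw [funext (iterate_deriv_gaussian_eq n)]
    exact tendsto_eval_mul_exp_neg_sq_atTop _
  · rw [funext (iterate_deriv_gaussian_eq n)]
    exact tendsto_eval_mul_exp_neg_sq_atBot _
  · rw [Multiset.mem_toFinset, mem_roots (monic_hermiteR n).ne_zero] at hx
    exact iterate_deriv_gaussian_eq_zero_iff.2 hx
  · rw [Multiset.mem_toFinset, mem_roots (monic_hermiteR _).ne_zero]
    exact iterate_deriv_gaussian_eq_zero_iff.1 hx

theorem le_card_roots_toFinset_hermiteR (n : ℕ) : n ≤ (hermiteR n).roots.toFinset.card := by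
  induction n with
  | zero => exact Nat.zero_le _
  | succ n ih =>
    rcases n with _ | n
    · simp [hermiteR]
    · exact ih.trans_lt (card_roots_toFinset_hermiteR_lt (Finset.card_pos.1 (by omega)))

theorem card_roots_hermiteR (n : ℕ) : (hermiteR n).roots.card = n :=
  le_antisymm ((card_roots' _).trans (natDegree_hermiteR n).le)
    ((le_card_roots_toFinset_hermiteR n).trans (Multiset.toFinset_card_le _))

theorem nodup_roots_hermiteR (n : ℕ) : (hermiteR n).roots.Nodup := by
  rw [← Multiset.toFinset_card_eq_card_iff_nodup]
  exact le_antisymm (Multiset.toFinset_card_le _)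
    ((card_roots_hermiteR n).trans_le (le_card_roots_toFinset_hermiteR n))

theorem stmt2_general (N : ℕ) (x : ℝ) (hx : (hermiteR N).IsRoot x) :
    x / 2 = (((hermiteR N).roots.filter (fun y => y ≠ x)).map (fun y => 1 / (x - y))).sum := by
  have hP : hermiteR N ≠ 0 := (monic_hermiteR N).ne_zero
  have h_splits : (hermiteR N).Splits :=
    splits_iff_card_roots.2 (by rw [card_roots_hermiteR, natDegree_hermiteR])
  have h_sep : (hermiteR N).Separable :=
    (nodup_roots_iff_of_splits hP h_splits).1 (nodup_roots_hermiteR N)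
  have h_deriv : eval x (derivative (hermiteR N)) ≠ 0 :=
    h_sep.eval₂_derivative_ne_zero (RingHom.id ℝ) hx
  have h_sum := h_splits.eval_derivative_derivative_of_nodup (monic_hermiteR N)
    (nodup_roots_hermiteR N) ((mem_roots hP).2 hx)
  rw [eval_derivative_derivative_hermiteR_of_isRoot hx] at h_sum
  rw [← (nodup_roots_hermiteR N).erase_eq_filter]
  field_simp
  linarith [mul_right_cancel₀ h_deriv h_sum]

theorem stmt2 (N : ℕ) (hN : 1 ≤ N) (x : ℝ) (hx : (hermiteR N).IsRoot x) :
    x / 2 = (((hermiteR N).roots.filter (fun y => y ≠ x)).map (fun y => 1 / (x - y))).sum :=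
  stmt2_general N x hx
end

section
/- Let P be a real polynomial of degree n ≥ 1 all of whose roots are real and simple (its root multiset has n pairwise distinct real elements). If y ∈ ℝ satisfies P'(y) = 0, then P(y) ≠ 0 and Σ_{x ∈ roots(P)} 1/(x − y)² = − P''(y)/P(y). -/
/-!
Writing `P = c ∏ (X - a)` over its roots, the logarithmic derivative gives
`P'(y) = P(y) Σ 1/(y - a)` and `P''(y) = P(y) ((Σ 1/(y - a))² - Σ 1/(y - a)²)` away from the
roots. At a critical point `y` the first sum vanishes, which leaves `P''(y) = -P(y) Σ 1/(y - a)²`.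
And `y` is not a root, since a common root of `P` and `P'` has multiplicity at least two.
-/

open Polynomial

section LogDerivative

variable {K : Type*} [Field K] {s : Multiset K} {y : K}

theorem eval_derivative_multiset_prod_X_sub_C (hy : y ∉ s) :
    (derivative (s.map fun a => X - C a).prod).eval y =
      (s.map fun a => X - C a).prod.eval y * (s.map fun a => (y - a)⁻¹).sum := by
  induction s using Multiset.induction with
  | empty => simp
  | cons a s ih =>
    have hya : y - a ≠ 0 := sub_ne_zero.2 fun h => hy (h ▸ Multiset.mem_cons_self y s)
    have ih := ih fun h => hy (Multiset.mem_cons_of_mem h)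
    simp only [Multiset.map_cons, Multiset.prod_cons, Multiset.sum_cons, derivative_mul,
      derivative_X_sub_C, eval_add, eval_mul, eval_one, eval_sub, eval_X, eval_C, ih]
    field_simp

theorem eval_derivative_derivative_multiset_prod_X_sub_C (hy : y ∉ s) :
    (derivative (derivative (s.map fun a => X - C a).prod)).eval y =
      (s.map fun a => X - C a).prod.eval y *
        ((s.map fun a => (y - a)⁻¹).sum ^ 2 - (s.map fun a => (y - a)⁻¹ ^ 2).sum) := by
  induction s using Multiset.induction with
  | empty => simp
  | cons a s ih =>
    have hya : y - a ≠ 0 := sub_ne_zero.2 fun h => hy (h ▸ Multiset.mem_cons_self y s)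
    have hys : y ∉ s := fun h => hy (Multiset.mem_cons_of_mem h)
    simp only [Multiset.map_cons, Multiset.prod_cons, Multiset.sum_cons]
    rw [derivative_mul, derivative_X_sub_C, one_mul, derivative_add, derivative_mul,
      derivative_X_sub_C, one_mul]
    simp only [eval_add, eval_mul, eval_sub, eval_X, eval_C, ih hys,
      eval_derivative_multiset_prod_X_sub_C hys]
    field_simp
    ring

end LogDerivative

section Splits

variable {K : Type*} [Field K] {P : K[X]} {y : K}

theorem eval_eq_leadingCoeff_mul_eval_prod_roots (hroots : P.roots.card = P.natDegree) :
    P.eval y = P.leadingCoeff * (P.roots.map fun a => X - C a).prod.eval y := by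
  conv_lhs => rw [← C_leadingCoeff_mul_prod_multiset_X_sub_C hroots]
  rw [eval_mul, eval_C]

theorem eval_derivative_of_card_roots (hroots : P.roots.card = P.natDegree)
    (hy : ¬P.IsRoot y) :
    (derivative P).eval y = P.eval y * (P.roots.map fun a => (y - a)⁻¹).sum := by
  have hys : y ∉ P.roots := fun h => hy (isRoot_of_mem_roots h)
  rw [eval_eq_leadingCoeff_mul_eval_prod_roots hroots, mul_assoc,
    ← eval_derivative_multiset_prod_X_sub_C hys, ← eval_C_mul,
    ← derivative_C_mul, C_leadingCoeff_mul_prod_multiset_X_sub_C hroots]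

theorem eval_derivative_derivative_of_card_roots (hroots : P.roots.card = P.natDegree)
    (hy : ¬P.IsRoot y) :
    (derivative (derivative P)).eval y = P.eval y *
      ((P.roots.map fun a => (y - a)⁻¹).sum ^ 2 - (P.roots.map fun a => (y - a)⁻¹ ^ 2).sum) := by
  have hys : y ∉ P.roots := fun h => hy (isRoot_of_mem_roots h)
  rw [eval_eq_leadingCoeff_mul_eval_prod_roots hroots, mul_assoc,
    ← eval_derivative_derivative_multiset_prod_X_sub_C hys, ← eval_C_mul,
    ← derivative_C_mul, ← derivative_C_mul, C_leadingCoeff_mul_prod_multiset_X_sub_C hroots]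

end Splits

theorem not_isRoot_of_isRoot_derivative {K : Type*} [Field K] {P : K[X]} {y : K} (hP : P ≠ 0)
    (hnodup : P.roots.Nodup) (hy : (derivative P).IsRoot y) : ¬P.IsRoot y := by
  classical
  intro hPy
  have hmult := (one_lt_rootMultiplicity_iff_isRoot hP).2 ⟨hPy, hy⟩
  rw [← count_roots] at hmult
  exact (Multiset.nodup_iff_count_le_one.1 hnodup y).not_gt hmult

theorem stmt3 (P : Polynomial ℝ) (n : ℕ) (hn : 1 ≤ n) (hdeg : P.natDegree = n)
    (hcard : P.roots.card = n) (hnodup : P.roots.Nodup)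
    (y : ℝ) (hy : (Polynomial.derivative P).eval y = 0) :
    P.eval y ≠ 0 ∧
      (P.roots.map (fun x => 1 / (x - y) ^ 2)).sum =
        -((Polynomial.derivative (Polynomial.derivative P)).eval y) / P.eval y := by
  have hP : P ≠ 0 := fun h => by simp [h] at hdeg; omega
  have hroots : P.roots.card = P.natDegree := hcard.trans hdeg.symm
  have hPy : ¬P.IsRoot y := not_isRoot_of_isRoot_derivative hP hnodup hy
  have hsum : (P.roots.map fun a => (y - a)⁻¹).sum = 0 := by
    have h := eval_derivative_of_card_roots hroots hPy
    rw [hy, eq_comm, mul_eq_zero] at h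
    exact h.resolve_left hPy
  refine ⟨hPy, ?_⟩
  rw [eval_derivative_derivative_of_card_roots hroots hPy, hsum, eq_div_iff hPy]
  have hsq : ∀ x ∈ P.roots, 1 / (x - y) ^ 2 = (y - x)⁻¹ ^ 2 := fun x _ => by
    rw [one_div, inv_pow, ← neg_sub, neg_sq]
  rw [Multiset.map_congr rfl hsq]
  ring
end

section
/- Let k ≥ 1 and let P be a monic real polynomial of degree k + 1 with k + 1 pairwise distinct real roots; then its derivative P' has k pairwise distinct real roots, none of which is a root of P. For every 0 ≤ m ≤ k − 1 there exists a real polynomial g of degree at most m − 1 such that for every root x of P: Σ_{y ∈ roots(P')} [ y^m · (x − y)^{−2} · ( Σ_{x' ∈ roots(P)} (x' − y)^{−2} )^{−1} ] = ((k − m)/(k + 1))·x^m + g(x). -/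
/-!
Write `P = ∏ (X - xᵢ)` and `P' = (k + 1) W` with `W = ∏ (X - yⱼ)`, and let
`Wr(a, b) = a b' - a' b` be the Wronskian. Since `P' = ∑ᵢ P / (X - xᵢ)`, one gets
`Wr(P', P) = ∑ᵢ (P / (X - xᵢ))²`, so at a critical point `y` the inner sum `∑ᵢ (xᵢ - y)⁻²` is
`-P''(y) / P(y)`. In the same way, Lagrange interpolation on the nodes `yⱼ` gives
`Wr(r, W) = ∑ⱼ r(yⱼ) / W'(yⱼ) · (W / (X - yⱼ))²` whenever `deg r < k`. With `r = X^m P mod W`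
(so `r(yⱼ) = yⱼ^m P(yⱼ)`) the left-hand side at a root `x` of `P` becomes
`-Wr(r, W)(x) / ((k + 1) W(x)²)`, and writing `X^m P = r + W q`, with `q` monic of degree `m + 1`,
this equals `x^m - q'(x) / (k + 1)`.
-/

open Polynomial Finset Lagrange

namespace Polynomial

variable {R ι : Type*} [CommRing R]

theorem wronskian_sum_left (s : Finset ι) (f : ι → R[X]) (b : R[X]) :
    wronskian (∑ i ∈ s, f i) b = ∑ i ∈ s, wronskian (f i) b :=
  map_sum ((wronskianBilin R).flip b) f s

theorem wronskian_C_mul_left (a : R) (p b : R[X]) :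
    wronskian (C a * p) b = C a * wronskian p b := by
  rw [wronskian, wronskian, derivative_C_mul]
  ring

theorem wronskian_modByMonic_left (p q : R[X]) :
    wronskian (p %ₘ q) q = wronskian p q + q ^ 2 * derivative (p /ₘ q) := by
  rw [modByMonic_eq_sub_mul_div, wronskian, wronskian, derivative_sub, derivative_mul]
  ring

theorem degree_derivative_sub_C_mul_X_pow_lt {q : R[X]} (hq : q.Monic) {n : ℕ}
    (hdeg : q.natDegree = n + 1) :
    (derivative q - C ((n : R) + 1) * X ^ n).degree < (n : WithBot ℕ) := by
  rw [degree_lt_iff_coeff_zero]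
  intro j hj
  rw [coeff_sub, coeff_derivative, coeff_C_mul_X_pow]
  rcases hj.eq_or_lt with rfl | hlt
  · rw [if_pos rfl, ← hdeg, hq.coeff_natDegree]
    ring
  · rw [if_neg hlt.ne', coeff_eq_zero_of_natDegree_lt (by omega)]
    ring

theorem eq_C_leadingCoeff_mul_nodal_roots [IsDomain R] [DecidableEq R] {p : R[X]}
    (hnodup : p.roots.Nodup) (hroots : Multiset.card p.roots = p.natDegree) :
    p = C p.leadingCoeff * nodal p.roots.toFinset id := by
  conv_lhs => rw [← C_leadingCoeff_mul_prod_multiset_X_sub_C hroots]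
  rw [nodal, prod_eq_multiset_prod, Multiset.toFinset_val, hnodup.dedup]
  rfl

theorem not_isRoot_of_mem_roots_derivative [IsDomain R] {p : R[X]}
    (hnodup : p.roots.Nodup) {y : R} (hy : y ∈ (derivative p).roots) : ¬ p.IsRoot y := by
  classical
  intro hpy
  have hp : p ≠ 0 := by
    rintro rfl
    simp at hy
  have hmult : 1 < p.rootMultiplicity y :=
    (one_lt_rootMultiplicity_iff_isRoot hp).2 ⟨hpy, (mem_roots'.1 hy).2⟩
  rw [← count_roots] at hmult
  exact absurd (Multiset.nodup_iff_count_le_one.1 hnodup y) hmult.not_ge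

theorem card_roots_derivative_eq_and_nodup {p : ℝ[X]} (hnodup : p.roots.Nodup)
    (hroots : Multiset.card p.roots = p.natDegree) :
    Multiset.card (derivative p).roots = p.natDegree - 1 ∧ (derivative p).roots.Nodup := by
  have hle : Multiset.card (derivative p).roots ≤ p.natDegree - 1 :=
    (card_roots' _).trans (natDegree_derivative_le p)
  have hrolle := p.card_roots_toFinset_le_derivative
  rw [Multiset.toFinset_card_of_nodup hnodup, hroots] at hrolle
  have hdedup := (derivative p).roots.toFinset_card_le
  exact ⟨by omega, Multiset.toFinset_card_eq_card_iff_nodup.1 (by omega)⟩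

theorem derivative_eq_C_mul_nodal_roots_derivative {p : ℝ[X]} (hp : p.Monic)
    (hnodup : p.roots.Nodup) (hroots : Multiset.card p.roots = p.natDegree) :
    derivative p = C (p.natDegree : ℝ) * nodal (derivative p).roots.toFinset id := by
  obtain ⟨hcard, hnodup'⟩ := card_roots_derivative_eq_and_nodup hnodup hroots
  rw [← natDegree_derivative] at hcard
  conv_lhs => rw [eq_C_leadingCoeff_mul_nodal_roots hnodup' hcard]
  rw [leadingCoeff_derivative, hp.leadingCoeff, one_mul]

end Polynomial

namespace Lagrange

section CommRing

variable {R ι : Type*} [CommRing R] [DecidableEq ι] {s : Finset ι} {v : ι → R}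

theorem wronskian_nodal_erase_nodal {i : ι} (hi : i ∈ s) :
    wronskian (nodal (s.erase i) v) (nodal s v) = nodal (s.erase i) v ^ 2 := by
  rw [nodal_eq_mul_nodal_erase hi, wronskian, derivative_mul]
  simp only [derivative_sub, derivative_X, derivative_C, sub_zero]
  ring

theorem wronskian_derivative_nodal_nodal :
    wronskian (derivative (nodal s v)) (nodal s v) = ∑ i ∈ s, nodal (s.erase i) v ^ 2 := by
  rw [derivative_nodal, wronskian_sum_left]
  exact sum_congr rfl fun i hi => wronskian_nodal_erase_nodal hi

theorem eval_nodal_erase_mul_sub {i : ι} (hi : i ∈ s) (x : R) :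
    eval x (nodal (s.erase i) v) * (x - v i) = eval x (nodal s v) := by
  rw [nodal_eq_mul_nodal_erase hi, eval_mul]
  simp only [eval_sub, eval_X, eval_C]
  ring

end CommRing

section Field

variable {F ι : Type*} [Field F] [DecidableEq ι] {s : Finset ι} {v : ι → F}

theorem wronskian_nodal_of_degree_lt (hvs : Set.InjOn v s) {f : F[X]} (hf : f.degree < #s) :
    wronskian f (nodal s v) =
      ∑ i ∈ s, C (f.eval (v i) * nodalWeight s v i) * nodal (s.erase i) v ^ 2 := by
  conv_lhs => rw [eq_interpolate hvs hf, interpolate_apply]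
  rw [wronskian_sum_left]
  refine sum_congr rfl fun i hi => ?_
  rw [basis_eq_prod_sub_inv_mul_nodal_div hi, ← nodal_erase_eq_nodal_div hi, ← mul_assoc, ← C_mul,
    wronskian_C_mul_left, wronskian_nodal_erase_nodal hi]

theorem sum_inv_sq_sub_eq {x : F} (hx : eval x (nodal s v) ≠ 0) :
    ∑ i ∈ s, ((v i - x) ^ 2)⁻¹ =
      eval x (wronskian (derivative (nodal s v)) (nodal s v)) / eval x (nodal s v) ^ 2 := by
  rw [wronskian_derivative_nodal_nodal, eval_finsetSum, sum_div]
  refine sum_congr rfl fun i hi => ?_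
  rw [eval_pow, ← eval_nodal_erase_mul_sub hi x]
  rw [← eval_nodal_erase_mul_sub hi x] at hx
  have : x - v i ≠ 0 := right_ne_zero_of_mul hx
  have : eval x (nodal (s.erase i) v) ≠ 0 := left_ne_zero_of_mul hx
  rw [show (v i - x) ^ 2 = (x - v i) ^ 2 by ring]
  field_simp

theorem sum_inv_sq_sub_eq_of_isRoot_derivative {x : F} (hx : eval x (nodal s v) ≠ 0)
    (hcrit : (derivative (nodal s v)).IsRoot x) :
    ∑ i ∈ s, ((v i - x) ^ 2)⁻¹ =
      -eval x (derivative (derivative (nodal s v))) / eval x (nodal s v) := by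
  rw [sum_inv_sq_sub_eq hx, wronskian, eval_sub, eval_mul, eval_mul, hcrit.eq_zero]
  field_simp
  ring

theorem sum_mul_nodalWeight_div_sq_eq (hvs : Set.InjOn v s) {f : F[X]} (hf : f.degree < #s)
    {x : F} (hx : eval x (nodal s v) ≠ 0) :
    ∑ i ∈ s, f.eval (v i) * nodalWeight s v i * ((x - v i) ^ 2)⁻¹ =
      eval x (wronskian f (nodal s v)) / eval x (nodal s v) ^ 2 := by
  rw [wronskian_nodal_of_degree_lt hvs hf, eval_finsetSum, sum_div]
  refine sum_congr rfl fun i hi => ?_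
  rw [eval_mul, eval_C, eval_pow, ← eval_nodal_erase_mul_sub hi x]
  rw [← eval_nodal_erase_mul_sub hi x] at hx
  have : x - v i ≠ 0 := right_ne_zero_of_mul hx
  have : eval x (nodal (s.erase i) v) ≠ 0 := left_ne_zero_of_mul hx
  field_simp

end Field

theorem sum_critical_points_eq {F : Type*} [Field F] [DecidableEq F] {S T : Finset F} {n : F}
    (hn : n ≠ 0) (hPW : derivative (nodal S id) = C n * nodal T id) (hST : Disjoint S T) (m : ℕ)
    {x : F} (hx : x ∈ S) :
    ∑ y ∈ T, y ^ m * ((x - y) ^ 2)⁻¹ * (∑ x' ∈ S, ((x' - y) ^ 2)⁻¹)⁻¹ =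
      x ^ m - eval x (derivative ((X ^ m * nodal S id) /ₘ nodal T id)) / n := by
  set P := nodal S id
  set W := nodal T id
  have hr : ((X ^ m * P) %ₘ W).degree < #T := by
    simpa only [W, degree_nodal] using degree_modByMonic_lt (X ^ m * P) (nodal_monic : W.Monic)
  have hWx : eval x W ≠ 0 :=
    eval_nodal_not_at_node fun y hy hxy => disjoint_left.1 hST hx (hxy ▸ hy)
  have hterm : ∀ y ∈ T, y ^ m * ((x - y) ^ 2)⁻¹ * (∑ x' ∈ S, ((x' - y) ^ 2)⁻¹)⁻¹ =
      -(eval y ((X ^ m * P) %ₘ W) * nodalWeight T id y * ((x - y) ^ 2)⁻¹) / n := by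
    intro y hy
    have hPy : eval y P ≠ 0 :=
      eval_nodal_not_at_node fun x' hx' hyx => disjoint_left.1 hST hx' (hyx ▸ hy : id x' ∈ T)
    have hWy : eval y W = 0 := eval_nodal_at_node (v := id) hy
    have hcrit : (derivative P).IsRoot y := by rw [IsRoot, hPW, eval_mul, hWy, mul_zero]
    have hsum : ∑ x' ∈ S, ((x' - y) ^ 2)⁻¹ =
        -eval y (derivative (derivative P)) / eval y P :=
      sum_inv_sq_sub_eq_of_isRoot_derivative hPy hcrit
    have hry : eval y ((X ^ m * P) %ₘ W) = eval y (X ^ m * P) :=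
      eval₂_modByMonic_eq_self_of_root hWy
    have hw : nodalWeight T id y = (eval y (derivative W))⁻¹ :=
      nodalWeight_eq_eval_derivative_nodal hy
    rw [hsum, hry, hw, hPW, derivative_C_mul, inv_div]
    simp only [eval_mul, eval_C, eval_pow, eval_X]
    ring
  have hsum : ∑ y ∈ T, eval y ((X ^ m * P) %ₘ W) * nodalWeight T id y * ((x - y) ^ 2)⁻¹ =
      eval x (wronskian ((X ^ m * P) %ₘ W) W) / eval x W ^ 2 :=
    sum_mul_nodalWeight_div_sq_eq (Set.injOn_id _) hr hWx
  rw [sum_congr rfl hterm, ← sum_div, sum_neg_distrib, hsum, wronskian_modByMonic_left, wronskian]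
  have hPx : eval x P = 0 := eval_nodal_at_node (v := id) hx
  simp only [derivative_mul, hPW, eval_add, eval_sub, eval_mul, eval_pow, eval_C, eval_X, hPx]
  field_simp
  ring

theorem exists_sum_critical_points_eq {F : Type*} [Field F] [DecidableEq F] {S T : Finset F}
    {n : F} (hn : n ≠ 0) (hPW : derivative (nodal S id) = C n * nodal T id) (hST : Disjoint S T)
    (hcard : #S = #T + 1) (m : ℕ) :
    ∃ g : F[X], g.degree < (m : WithBot ℕ) ∧ ∀ x ∈ S,
      ∑ y ∈ T, y ^ m * ((x - y) ^ 2)⁻¹ * (∑ x' ∈ S, ((x' - y) ^ 2)⁻¹)⁻¹ =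
        (n - 1 - m) / n * x ^ m + g.eval x := by
  set q := (X ^ m * nodal S id) /ₘ nodal T id
  have hXP : (X ^ m * nodal S id).Monic := (monic_X_pow m).mul nodal_monic
  have hXPdeg : (X ^ m * nodal S id).natDegree = m + (#T + 1) := by
    rw [(monic_X_pow m).natDegree_mul nodal_monic, natDegree_X_pow, natDegree_nodal, hcard]
  have hqdeg : q.natDegree = m + 1 := by
    rw [natDegree_divByMonic _ nodal_monic, hXPdeg, natDegree_nodal]
    omega
  have hq : q.Monic := by
    rw [Monic, leadingCoeff_divByMonic_of_monic nodal_monic, hXP.leadingCoeff]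
    rw [degree_nodal, degree_eq_natDegree hXP.ne_zero, hXPdeg]
    exact_mod_cast (by omega : #T ≤ m + (#T + 1))
  refine ⟨C n⁻¹ * (C ((m : F) + 1) * X ^ m - derivative q), ?_, fun x hx => ?_⟩
  · rw [degree_C_mul (inv_ne_zero hn), ← degree_neg, neg_sub]
    exact degree_derivative_sub_C_mul_X_pow_lt hq hqdeg
  · rw [sum_critical_points_eq hn hPW hST m hx]
    simp only [eval_mul, eval_sub, eval_C, eval_pow, eval_X]
    field_simp
    ring

end Lagrange

theorem stmt5_general (k : ℕ) (P : Polynomial ℝ) (hmonic : P.Monic)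
    (hdeg : P.natDegree = k + 1) (hcard : P.roots.card = k + 1) (hnodup : P.roots.Nodup) :
    ((Polynomial.derivative P).roots.card = k ∧ (Polynomial.derivative P).roots.Nodup ∧
      ∀ y ∈ (Polynomial.derivative P).roots, ¬ P.IsRoot y) ∧
    ∀ m : ℕ, m ≤ k - 1 → ∃ g : Polynomial ℝ, g.degree < (m : WithBot ℕ) ∧
      ∀ x ∈ P.roots,
        ((Polynomial.derivative P).roots.map (fun y =>
            y ^ m * ((x - y) ^ 2)⁻¹ * ((P.roots.map (fun x' => ((x' - y) ^ 2)⁻¹)).sum)⁻¹)).sum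
          = ((k : ℝ) - (m : ℝ)) / ((k : ℝ) + 1) * x ^ m + g.eval x := by
  have hroots : Multiset.card P.roots = P.natDegree := hcard.trans hdeg.symm
  obtain ⟨hcardD, hnodupD⟩ := card_roots_derivative_eq_and_nodup hnodup hroots
  rw [hdeg, Nat.add_sub_cancel] at hcardD
  refine ⟨⟨hcardD, hnodupD, fun y hy => not_isRoot_of_mem_roots_derivative hnodup hy⟩,
    fun m _ => ?_⟩
  set S := P.roots.toFinset
  set T := (derivative P).roots.toFinset
  have hP : P = nodal S id := by
    simpa [hmonic.leadingCoeff] using eq_C_leadingCoeff_mul_nodal_roots hnodup hroots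
  have hPW : derivative (nodal S id) = C ((k : ℝ) + 1) * nodal T id := by
    rw [← hP, derivative_eq_C_mul_nodal_roots_derivative hmonic hnodup hroots, hdeg,
      Nat.cast_succ]
  have hST : Disjoint S T := disjoint_right.2 fun y hy hyS =>
    not_isRoot_of_mem_roots_derivative hnodup (Multiset.mem_toFinset.1 hy)
      (isRoot_of_mem_roots (Multiset.mem_toFinset.1 hyS))
  have hcardST : #S = #T + 1 := by
    rw [Multiset.toFinset_card_of_nodup hnodup, Multiset.toFinset_card_of_nodup hnodupD, hcard,
      hcardD]
  obtain ⟨g, hg, hsum⟩ := exists_sum_critical_points_eq (by positivity) hPW hST hcardST m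
  refine ⟨g, hg, fun x hx => ?_⟩
  have hPS : P.roots = S.val := hnodup.dedup.symm
  have hDT : (derivative P).roots = T.val := hnodupD.dedup.symm
  simp only [hPS, hDT, sum_map_val]
  rw [hsum x (Multiset.mem_toFinset.2 hx)]
  ring

theorem stmt5 (k : ℕ) (hk : 1 ≤ k) (P : Polynomial ℝ) (hmonic : P.Monic)
    (hdeg : P.natDegree = k + 1) (hcard : P.roots.card = k + 1) (hnodup : P.roots.Nodup) :
    ((Polynomial.derivative P).roots.card = k ∧ (Polynomial.derivative P).roots.Nodup ∧
      ∀ y ∈ (Polynomial.derivative P).roots, ¬ P.IsRoot y) ∧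
    ∀ m : ℕ, m ≤ k - 1 → ∃ g : Polynomial ℝ, g.degree < (m : WithBot ℕ) ∧
      ∀ x ∈ P.roots,
        ((Polynomial.derivative P).roots.map (fun y =>
            y ^ m * ((x - y) ^ 2)⁻¹ * ((P.roots.map (fun x' => ((x' - y) ^ 2)⁻¹)).sum)⁻¹)).sum
          = ((k : ℝ) - (m : ℝ)) / ((k : ℝ) + 1) * x ^ m + g.eval x :=
  stmt5_general k P hmonic hdeg hcard hnodup
end

section
/- Let k ≥ 1 and let P be a monic real polynomial of degree k + 1 with k + 1 pairwise distinct real roots; then P' has k pairwise distinct real roots, none of which is a root of P. For every root x of P: Σ_{y ∈ roots(P')} [ (x − y)^{−2} · ( Σ_{x' ∈ roots(P)} (x' − y)^{−2} )^{−1} ] = k/(k + 1). -/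
/-! At a critical point `y` of `P` the inner sum is a second logarithmic derivative:
`∑ x', (x' - y)⁻² = -(P'/P)'(y) = -P''(y) / P(y)`. Dividing `P` by `P'` and expanding the
remainder over the simple roots of `P'` by Lagrange interpolation gives the partial fraction
decomposition `P / P' = q + ∑ y, P(y) / P''(y) / (u - y)`, where `q` is linear with slope
`1 / (k + 1)`. Differentiating at a root `x` of `P`, where `(P / P')' = 1`, yields
`∑ y, P(y) / P''(y) / (x - y)² = 1 / (k + 1) - 1`, which is the claim up to sign.
The roots of `P'` are real and simple by Rolle's theorem. -/

open Polynomial Filter Topology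

namespace Polynomial

theorem not_isRoot_derivative_of_roots_nodup {R : Type*} [CommRing R] [IsDomain R] {P : R[X]}
    (hP : P ≠ 0) (hnodup : P.roots.Nodup) {y : R} (hy : P.IsRoot y) :
    ¬ (derivative P).IsRoot y := fun hy' => by
  classical
  have hmult := (one_lt_rootMultiplicity_iff_isRoot hP).2 ⟨hy, hy'⟩
  have hcount := Multiset.nodup_iff_count_le_one.1 hnodup y
  rw [count_roots] at hcount
  omega

theorem Splits.derivative_of_roots_nodup {P : ℝ[X]} (hP : Splits P) (hnodup : P.roots.Nodup) :
    Splits (derivative P) ∧ (derivative P).roots.Nodup := by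
  have hrolle := card_roots_toFinset_le_derivative P
  rw [Multiset.toFinset_card_of_nodup hnodup, ← hP.natDegree_eq_card_roots] at hrolle
  have hdedup := (derivative P).roots.toFinset_card_le
  have hdeg := (derivative P).card_roots'
  rw [natDegree_derivative] at hdeg
  refine ⟨splits_iff_card_roots.2 ?_, Multiset.toFinset_card_eq_card_iff_nodup.1 (by omega)⟩
  rw [natDegree_derivative]
  omega

section Calculus

variable {𝕜 : Type*} [NontriviallyNormedField 𝕜]

theorem hasDerivAt_multiset_sum_div_sub (s : Multiset 𝕜) (c : 𝕜 → 𝕜) {x : 𝕜} (hx : x ∉ s) :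
    HasDerivAt (fun u => (s.map fun z => c z / (u - z)).sum)
      (-(s.map fun z => c z / (x - z) ^ 2).sum) x := by
  induction s using Multiset.induction_on with
  | empty => simpa using hasDerivAt_const x (0 : 𝕜)
  | cons a s ih =>
    rw [Multiset.mem_cons, not_or] at hx
    have ha := (hasDerivAt_const x (c a)).div ((hasDerivAt_id x).sub_const a)
      (sub_ne_zero.2 hx.1)
    simp only [Multiset.map_cons, Multiset.sum_cons, neg_add]
    exact (ha.add (ih hx.2)).congr_deriv (by simp only [id]; ring)

theorem Splits.sum_roots_inv_sub_sq {P : 𝕜[X]} (hP : Splits P) {y : 𝕜} (hy : P.eval y ≠ 0) :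
    (P.roots.map fun z => ((z - y) ^ 2)⁻¹).sum =
      ((derivative P).eval y ^ 2 - P.eval y * (derivative (derivative P)).eval y) /
        P.eval y ^ 2 := by
  have hlogDeriv : (fun u => (P.roots.map fun z => 1 / (u - z)).sum) =ᶠ[𝓝 y]
      fun u => (derivative P).eval u / P.eval u := by
    filter_upwards [P.continuous.continuousAt.eventually_ne hy] with u hu
    exact (hP.eval_derivative_div_eval_of_ne_zero hu).symm
  have hsum := hasDerivAt_multiset_sum_div_sub P.roots (fun _ => 1)
    (fun h => hy (isRoot_of_mem_roots h))
  have hquot := ((derivative P).hasDerivAt y).div (P.hasDerivAt y) hy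
  have heq := (hlogDeriv.hasDerivAt_iff.1 hsum).unique hquot
  have hsymm : (P.roots.map fun z => 1 / (y - z) ^ 2) = P.roots.map fun z => ((z - y) ^ 2)⁻¹ :=
    Multiset.map_congr rfl fun z _ => by rw [one_div, sub_sq_comm]
  rw [hsymm] at heq
  rw [← neg_neg (Multiset.sum _), heq]
  ring

end Calculus

section PartialFractions

variable {F : Type*} [Field F]

theorem eval_div_eq_sum_roots_of_degree_lt {Q A : F[X]} (hQ : Splits Q) (hnodup : Q.roots.Nodup)
    (hA : A.degree < Q.degree) {u : F} (hu : Q.eval u ≠ 0) :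
    A.eval u / Q.eval u =
      (Q.roots.map fun y => A.eval y / (derivative Q).eval y / (u - y)).sum := by
  classical
  set s : Finset F := ⟨Q.roots, hnodup⟩
  have hQ0 : Q ≠ 0 := fun h => hu (by simp [h])
  have hnodal : Q = C Q.leadingCoeff * Lagrange.nodal s id := hQ.eq_prod_roots
  have hus : ∀ y ∈ s, u ≠ id y := fun y hy h => hu (h ▸ isRoot_of_mem_roots hy)
  have hAs : A.degree < s.card := by
    rwa [degree_eq_natDegree hQ0, hQ.natDegree_eq_card_roots] at hA
  have hinterp : A.eval u = (Lagrange.nodal s id).eval u *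
      ∑ y ∈ s, Lagrange.nodalWeight s id y * (u - id y)⁻¹ * A.eval (id y) := by
    conv_lhs => rw [Lagrange.eq_interpolate (Set.injOn_id _) hAs]
    exact Lagrange.eval_interpolate_not_at_node _ hus
  have hlc : Q.leadingCoeff ≠ 0 := leadingCoeff_ne_zero.2 hQ0
  have hQ_eval : Q.eval u = Q.leadingCoeff * (Lagrange.nodal s id).eval u := by
    conv_lhs => rw [hnodal]
    rw [eval_mul, eval_C]
  have hweight : ∀ y ∈ s,
      Lagrange.nodalWeight s id y = Q.leadingCoeff / (derivative Q).eval y := fun y hy => by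
    conv_rhs => enter [2]; rw [hnodal]
    rw [Lagrange.nodalWeight_eq_eval_derivative_nodal hy, derivative_C_mul, eval_mul, eval_C,
      div_mul_cancel_left₀ hlc, id]
  have hnodal_ne : (Lagrange.nodal s id).eval u ≠ 0 := Lagrange.eval_nodal_not_at_node hus
  rw [hinterp, hQ_eval, mul_comm Q.leadingCoeff, ← div_div, mul_div_cancel_left₀ _ hnodal_ne,
    Finset.sum_div]
  refine Finset.sum_congr rfl fun y hy => ?_
  rw [hweight y hy]
  simp only [id]
  field_simp

theorem eval_div_eq_eval_div_add_sum_roots {Q : F[X]} (hQ : Splits Q) (hnodup : Q.roots.Nodup)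
    (R : F[X]) {u : F} (hu : Q.eval u ≠ 0) :
    R.eval u / Q.eval u = (R / Q).eval u +
      (Q.roots.map fun y => R.eval y / (derivative Q).eval y / (u - y)).sum := by
  have hQ0 : Q ≠ 0 := fun h => hu (by simp [h])
  have hmod_eval : ∀ y ∈ Q.roots, (R % Q).eval y = R.eval y := fun y hy => by
    rw [EuclideanDomain.mod_eq_sub_mul_div, eval_sub, eval_mul, (isRoot_of_mem_roots hy).eq_zero,
      zero_mul, sub_zero]
  have hmod := eval_div_eq_sum_roots_of_degree_lt hQ hnodup (EuclideanDomain.mod_lt R hQ0) hu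
  rw [Multiset.map_congr rfl fun y hy => by rw [hmod_eval y hy]] at hmod
  conv_lhs => rw [← EuclideanDomain.div_add_mod R Q]
  rw [eval_add, eval_mul, add_div, mul_div_cancel_left₀ _ hu, hmod]

theorem derivative_div_derivative [CharZero F] {P : F[X]} (hP : P.natDegree ≠ 0) :
    derivative (P / derivative P) = C (P.natDegree : F)⁻¹ := by
  have hP0 : P ≠ 0 := fun h => hP (by simp [h])
  have hD0 : derivative P ≠ 0 := derivative_ne_zero.2 hP
  have hdeg_le : (derivative P).degree ≤ P.degree := degree_derivative_le
  have hq0 : P / derivative P ≠ 0 := fun h => by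
    rw [Polynomial.div_eq_zero_iff hD0] at h
    exact (not_lt_of_ge hdeg_le) h
  have hdeg := degree_add_div hD0 hdeg_le
  rw [degree_eq_natDegree hD0, degree_eq_natDegree hq0, degree_eq_natDegree hP0,
    natDegree_derivative, ← Nat.cast_add, Nat.cast_inj] at hdeg
  have hq1 : (P / derivative P).natDegree = 1 := by omega
  rw [eq_X_add_C_of_natDegree_le_one hq1.le, derivative_add, derivative_C_mul_X, derivative_C,
    add_zero, ← hq1, coeff_natDegree, leadingCoeff_div hdeg_le, leadingCoeff_derivative,
    div_mul_cancel_left₀ (leadingCoeff_ne_zero.2 hP0)]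

end PartialFractions

theorem sum_roots_derivative_eval_div_sub_sq {𝕜 : Type*} [NontriviallyNormedField 𝕜]
    [CharZero 𝕜] {P : 𝕜[X]} (hP : P.natDegree ≠ 0) (hD : Splits (derivative P))
    (hDnodup : (derivative P).roots.Nodup) {x : 𝕜} (hx : P.IsRoot x)
    (hDx : (derivative P).eval x ≠ 0) :
    ((derivative P).roots.map fun y =>
        P.eval y / (derivative (derivative P)).eval y / (x - y) ^ 2).sum =
      (P.natDegree : 𝕜)⁻¹ - 1 := by
  set D := derivative P
  set c : 𝕜 → 𝕜 := fun y => P.eval y / (derivative D).eval y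
  have hpartial : (fun u => P.eval u / D.eval u) =ᶠ[𝓝 x] fun u => (P / D).eval u +
      (D.roots.map fun y => c y / (u - y)).sum := by
    filter_upwards [D.continuous.continuousAt.eventually_ne hDx] with u hu
    exact eval_div_eq_eval_div_add_sum_roots hD hDnodup P hu
  have hquot := (P.hasDerivAt x).div (D.hasDerivAt x) hDx
  have hdecomp := ((P / D).hasDerivAt x).add
    (hasDerivAt_multiset_sum_div_sub D.roots c fun h => hDx (isRoot_of_mem_roots h))
  have heq := (hpartial.hasDerivAt_iff.1 hquot).unique hdecomp
  rw [derivative_div_derivative hP, eval_C, hx.eq_zero, zero_mul, sub_zero, ← sq,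
    div_self (pow_ne_zero 2 hDx)] at heq
  linear_combination heq

end Polynomial

theorem stmt9_general (k : ℕ) (P : Polynomial ℝ) (hmonic : P.Monic)
    (hdeg : P.natDegree = k + 1) (hcard : P.roots.card = k + 1) (hnodup : P.roots.Nodup) :
    ((Polynomial.derivative P).roots.card = k ∧ (Polynomial.derivative P).roots.Nodup ∧
      ∀ y ∈ (Polynomial.derivative P).roots, ¬ P.IsRoot y) ∧
    ∀ x ∈ P.roots,
      ((Polynomial.derivative P).roots.map (fun y =>
          ((x - y) ^ 2)⁻¹ * ((P.roots.map (fun x' => ((x' - y) ^ 2)⁻¹)).sum)⁻¹)).sum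
        = (k : ℝ) / ((k : ℝ) + 1) := by
  have hP0 : P ≠ 0 := hmonic.ne_zero
  have hsplit : Splits P := splits_iff_card_roots.2 (hcard.trans hdeg.symm)
  obtain ⟨hDsplit, hDnodup⟩ := hsplit.derivative_of_roots_nodup hnodup
  have hnot_root : ∀ y ∈ (derivative P).roots, ¬ P.IsRoot y := fun y hy hPy =>
    not_isRoot_derivative_of_roots_nodup hP0 hnodup hPy (isRoot_of_mem_roots hy)
  refine ⟨⟨by rw [← hDsplit.natDegree_eq_card_roots, natDegree_derivative, hdeg,
    Nat.add_sub_cancel], hDnodup, hnot_root⟩, fun x hx => ?_⟩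
  have hPx : P.IsRoot x := isRoot_of_mem_roots hx
  have hinner : ∀ y ∈ (derivative P).roots, (P.roots.map fun x' => ((x' - y) ^ 2)⁻¹).sum =
      -((derivative (derivative P)).eval y / P.eval y) := fun y hy => by
    have hPy : P.eval y ≠ 0 := hnot_root y hy
    rw [hsplit.sum_roots_inv_sub_sq hPy, (isRoot_of_mem_roots hy).eq_zero]
    field_simp
    ring
  have hkey := sum_roots_derivative_eval_div_sub_sq (by omega) hDsplit hDnodup hPx
    (not_isRoot_derivative_of_roots_nodup hP0 hnodup hPx)
  rw [hdeg] at hkey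
  calc _ = ((derivative P).roots.map fun y =>
        -(P.eval y / (derivative (derivative P)).eval y / (x - y) ^ 2)).sum := by
        refine congrArg Multiset.sum (Multiset.map_congr rfl fun y hy => ?_)
        rw [hinner y hy, ← neg_inv, inv_div]
        ring
    _ = (k : ℝ) / ((k : ℝ) + 1) := by
        rw [Multiset.sum_map_neg, hkey]
        push_cast
        field_simp
        ring

theorem stmt9 (k : ℕ) (hk : 1 ≤ k) (P : Polynomial ℝ) (hmonic : P.Monic)
    (hdeg : P.natDegree = k + 1) (hcard : P.roots.card = k + 1) (hnodup : P.roots.Nodup) :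
    ((Polynomial.derivative P).roots.card = k ∧ (Polynomial.derivative P).roots.Nodup ∧
      ∀ y ∈ (Polynomial.derivative P).roots, ¬ P.IsRoot y) ∧
    ∀ x ∈ P.roots,
      ((Polynomial.derivative P).roots.map (fun y =>
          ((x - y) ^ 2)⁻¹ * ((P.roots.map (fun x' => ((x' - y) ^ 2)⁻¹)).sum)⁻¹)).sum
        = (k : ℝ) / ((k : ℝ) + 1) :=
  stmt9_general k P hmonic hdeg hcard hnodup
end

section
/- Let P be a monic real polynomial of degree N with N pairwise distinct real roots. For 1 ≤ k ≤ N set P_k = (k!/N!)·(d/dX)^{N−k} P, a monic polynomial of degree k whose roots x_1^k < x_2^k < ⋯ < x_k^k are real and pairwise distinct. For 1 ≤ k ≤ N − 1 define the k × (k+1) stochastic matrix α^k by α^k_{a,b} = (x_a^k − x_b^{k+1})^{−2} / Σ_{b'=1}^{k+1} (x_a^k − x_{b'}^{k+1})^{−2}, and for 1 ≤ k ≤ ℓ ≤ N define the k × ℓ matrix K^{k,ℓ} recursively by K^{k,k} = Id and K^{k,ℓ+1} = K^{k,ℓ}·α^ℓ. Then every entry of K^{k,ℓ} satisfies 0 ≤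 K^{k,ℓ}_{a,b} ≤ k/ℓ. -/
/-!
Write `q = ∏ (X - z)` for a polynomial with simple real roots `z`, of degree `n`. By Rolle, the
roots `y` of `q'` are simple and real and avoid the roots of `q`, so the same holds for every
`P_k`. Differentiating `q = (X - z) q_z` gives `q q'' = q'^2 - ∑_z q_z^2`, hence at a root `y` of
`q'` one has `∑_z (y - z)^{-2} = -q''(y) / q(y)`. Therefore
`α(y, z) = (y - z)^{-2} / ∑_{z'} (y - z')^{-2}` equals `w_y q_z(y) / (n (z - y))`, where
`w_y = 1 / r'(y)` is the barycentric weight of the node `y` for `r = q' / n`. Interpolating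
`q_z - r`, of degree `< n - 1`, at the nodes `y` and evaluating at `z` gives
`∑_y α(y, z) = (n - 1) / n`. So every `α^ℓ` is nonnegative with column sums `ℓ / (ℓ + 1)`, and by
induction `K^{k,ℓ+1}_{ab} ≤ (k / ℓ) ∑_c α^ℓ_{cb} = k / (ℓ + 1)`.
-/

open Polynomial Finset Lagrange

theorem List.sum_Icc_getD {α M : Type*} [AddCommMonoid M] (l : List α) (d : α) (f : α → M) :
    ∑ a ∈ Icc 1 l.length, f (l.getD (a - 1) d) = (l.map f).sum := by
  rw [← Ico_add_one_right_eq_Icc, sum_Ico_eq_sum_range, Nat.add_sub_cancel]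
  simp only [Nat.add_sub_cancel_left]
  induction l with
  | nil => simp
  | cons b l ih =>
    simp only [List.length_cons, Finset.sum_range_succ', List.getD_cons_succ, List.getD_cons_zero,
      ih, List.map_cons, List.sum_cons, add_comm]

theorem Multiset.sum_Icc_getD_sort {α M : Type*} [LinearOrder α] [AddCommMonoid M]
    (s : Multiset α) (d : α) (f : α → M) :
    ∑ a ∈ Finset.Icc 1 (card s), f ((s.sort (· ≤ ·)).getD (a - 1) d) = (s.map f).sum := by
  rw [← Multiset.length_sort (· ≤ ·), List.sum_Icc_getD]
  conv_rhs => rw [← Multiset.sort_eq s (· ≤ ·)]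
  rfl

theorem Multiset.getD_sort_mem {α : Type*} [LinearOrder α] (s : Multiset α) (d : α) {a : ℕ}
    (ha : a ∈ Finset.Icc 1 (card s)) : (s.sort (· ≤ ·)).getD (a - 1) d ∈ s := by
  rw [Finset.mem_Icc] at ha
  have hlen : a - 1 < (s.sort (· ≤ ·)).length := by rw [Multiset.length_sort]; omega
  rw [List.getD_eq_getElem _ _ hlen, ← Multiset.mem_sort (· ≤ ·)]
  exact List.getElem_mem hlen

namespace Lagrange

theorem nodal_mul_derivative_derivative {R ι : Type*} [CommRing R] [DecidableEq ι]
    (s : Finset ι) (v : ι → R) :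
    nodal s v * derivative (derivative (nodal s v)) =
      derivative (nodal s v) ^ 2 - ∑ i ∈ s, nodal (s.erase i) v ^ 2 := by
  have h : ∀ i ∈ s, nodal s v * derivative (nodal (s.erase i) v) =
      nodal (s.erase i) v * (derivative (nodal s v) - nodal (s.erase i) v) := by
    intro i hi
    rw [nodal_eq_mul_nodal_erase hi, derivative_mul]
    simp only [derivative_sub, derivative_X, derivative_C, sub_zero, one_mul]
    ring
  conv_lhs => rw [derivative_nodal, derivative_sum, mul_sum, sum_congr rfl h]
  rw [sum_congr rfl fun i _ => mul_sub _ _ _, sum_sub_distrib, ← sum_mul, ← derivative_nodal]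
  simp only [sq]

variable {F ι : Type*} [Field F] [DecidableEq ι] {s : Finset ι} {v : ι → F} {x : F}

theorem sum_inv_sub_sq_eq (hx : ∀ i ∈ s, x ≠ v i) :
    ∑ i ∈ s, ((x - v i) ^ 2)⁻¹ =
      (eval x (derivative (nodal s v)) ^ 2 -
        eval x (nodal s v) * eval x (derivative (derivative (nodal s v)))) /
        eval x (nodal s v) ^ 2 := by
  have hp : eval x (nodal s v) ≠ 0 := eval_nodal_not_at_node hx
  have herase : ∀ i ∈ s, eval x (nodal (s.erase i) v) = eval x (nodal s v) / (x - v i) := by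
    intro i hi
    rw [nodal_eq_mul_nodal_erase hi, eval_mul, eval_sub, eval_X, eval_C,
      mul_div_cancel_left₀ _ (sub_ne_zero.2 (hx i hi))]
  have h := congrArg (eval x) (nodal_mul_derivative_derivative s v)
  simp only [eval_mul, eval_sub, eval_pow, eval_finsetSum] at h
  rw [show _ - _ = ∑ i ∈ s, eval x (nodal (s.erase i) v) ^ 2 by linear_combination -h, sum_div]
  refine sum_congr rfl fun i hi => ?_
  rw [herase i hi]
  field_simp [sub_ne_zero.2 (hx i hi)]

section DerivativeRoots

variable {F : Type*} [Field F] {s t : Finset F}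

theorem notMem_of_derivative_nodal_eq (hst : derivative (nodal t id) = C (#t : F) * nodal s id)
    {y : F} (hy : y ∈ s) : y ∉ t := by
  classical
  intro hyt
  have hw := nodalWeight_ne_zero (Set.injOn_id _) hyt
  have hy0 : eval y (nodal s id) = 0 := eval_nodal_at_node (v := id) hy
  rw [nodalWeight_eq_eval_derivative_nodal hyt, hst, eval_mul, id, hy0, mul_zero, inv_zero] at hw
  exact hw rfl

variable [CharZero F]

theorem card_add_one_of_derivative_nodal_eq
    (hst : derivative (nodal t id) = C (#t : F) * nodal s id) (ht : t.Nonempty) :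
    #s + 1 = #t := by
  have h := congrArg natDegree hst
  rw [natDegree_derivative, natDegree_nodal, natDegree_C_mul (by simpa using ht.card_pos.ne'),
    natDegree_nodal] at h
  have := ht.card_pos
  omega

variable [DecidableEq F]

theorem sum_nodalWeight_mul_inv_sub_mul_eval_nodal_erase
    (hst : derivative (nodal t id) = C (#t : F) * nodal s id) {z : F} (hz : z ∈ t) :
    ∑ y ∈ s, nodalWeight s id y * (z - y)⁻¹ * eval y (nodal (t.erase z) id) = #t - 1 := by
  have hzs : ∀ y ∈ s, z ≠ y := fun y hy h => notMem_of_derivative_nodal_eq hst hy (h ▸ hz)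
  have hcard := card_add_one_of_derivative_nodal_eq hst ⟨z, hz⟩
  have hdeg : (nodal (t.erase z) id - nodal s id).degree < #s := by
    have hd : (nodal (t.erase z) id).degree = (nodal s id).degree := by
      rw [degree_nodal, degree_nodal, card_erase_of_mem hz]
      congr 1
      omega
    calc _ < (nodal (t.erase z) id).degree := degree_sub_lt_left hd nodal_ne_zero
          (by rw [nodal_monic.leadingCoeff, nodal_monic.leadingCoeff])
      _ = #s := by rw [hd, degree_nodal]
  have h := congrArg (eval z) (eq_interpolate (Set.injOn_id _) hdeg)
  rw [eval_interpolate_not_at_node (v := id) _ hzs, eval_sub] at h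
  have hQz : eval z (nodal (t.erase z) id) = #t * eval z (nodal s id) := by
    have h := eval_nodal_derivative_eval_node_eq (v := id) hz
    rwa [id, hst, eval_mul, eval_C, eq_comm] at h
  have hr : eval z (nodal s id) ≠ 0 := eval_nodal_not_at_node hzs
  have hnodes : ∀ y ∈ s, nodalWeight s id y * (z - id y)⁻¹ *
      eval (id y) (nodal (t.erase z) id - nodal s id) =
        nodalWeight s id y * (z - y)⁻¹ * eval y (nodal (t.erase z) id) := by
    intro y hy
    rw [eval_sub, eval_nodal_at_node hy, sub_zero, id]
  rw [sum_congr rfl hnodes, hQz] at h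
  refine mul_left_cancel₀ hr ?_
  linear_combination -h

theorem sum_inv_sub_sq_div_sum_inv_sub_sq
    (hst : derivative (nodal t id) = C (#t : F) * nodal s id) {z : F} (hz : z ∈ t) :
    ∑ y ∈ s, ((y - z) ^ 2)⁻¹ / ∑ z' ∈ t, ((y - z') ^ 2)⁻¹ = (#t - 1) / #t := by
  have ht : (#t : F) ≠ 0 := Nat.cast_ne_zero.2 (card_ne_zero_of_mem hz)
  have hterm : ∀ y ∈ s, ((y - z) ^ 2)⁻¹ / ∑ z' ∈ t, ((y - z') ^ 2)⁻¹ =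
      nodalWeight s id y * (z - y)⁻¹ * eval y (nodal (t.erase z) id) / #t := by
    intro y hy
    have hyt : ∀ z' ∈ t, y ≠ id z' := fun z' hz' h => notMem_of_derivative_nodal_eq hst hy (h ▸ hz')
    have hyz : y - z ≠ 0 := sub_ne_zero.2 (hyt z hz)
    have hzy : z - y ≠ 0 := sub_ne_zero.2 (hyt z hz).symm
    have hp : eval y (nodal t id) = (y - z) * eval y (nodal (t.erase z) id) := by
      rw [nodal_eq_mul_nodal_erase hz, eval_mul, eval_sub, eval_X, eval_C, id]
    have hQ : eval y (nodal (t.erase z) id) ≠ 0 :=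
      right_ne_zero_of_mul (hp ▸ eval_nodal_not_at_node hyt)
    have hd : eval y (derivative (nodal s id)) ≠ 0 := by
      have hw := nodalWeight_ne_zero (Set.injOn_id _) hy
      rw [nodalWeight_eq_eval_derivative_nodal hy, id] at hw
      exact fun h => hw (by rw [h, inv_zero])
    rw [nodalWeight_eq_eval_derivative_nodal hy, id]
    have hr : eval y (nodal s id) = 0 := eval_nodal_at_node (v := id) hy
    have hS := sum_inv_sub_sq_eq hyt
    simp only [id_eq, hst, derivative_mul, derivative_C, zero_mul, zero_add, eval_mul, eval_C, hr,
      mul_zero, ne_eq, OfNat.ofNat_ne_zero, not_false_eq_true, zero_pow, zero_sub, hp] at hS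
    rw [hS]
    field_simp
    ring
  rw [sum_congr rfl hterm, ← sum_div, sum_nodalWeight_mul_inv_sub_mul_eval_nodal_erase hst hz]

end DerivativeRoots

end Lagrange

namespace Polynomial

theorem Splits.eq_C_leadingCoeff_mul_nodal {R : Type*} [CommRing R] [IsDomain R] [DecidableEq R]
    {q : R[X]} (hq : q.Splits) (hnd : q.roots.Nodup) :
    q = C q.leadingCoeff * nodal q.roots.toFinset id := by
  conv_lhs => rw [hq.eq_prod_roots]
  rw [nodal, prod_eq_multiset_prod, Multiset.toFinset_val, hnd.dedup]
  rfl

variable {q : ℝ[X]}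

theorem splits_and_nodup_roots_derivative (hq : q.Splits) (hnd : q.roots.Nodup) :
    q.derivative.Splits ∧ q.derivative.roots.Nodup := by
  classical
  rcases eq_or_ne q.natDegree 0 with h0 | h0
  · simp [derivative_of_natDegree_zero h0]
  have h1 := q.card_roots_toFinset_le_derivative
  have h2 := Multiset.toFinset_card_le q.derivative.roots
  have h3 := card_roots' q.derivative
  rw [Multiset.toFinset_card_of_nodup hnd, splits_iff_card_roots.1 hq] at h1
  rw [natDegree_derivative] at h3
  rw [splits_iff_card_roots, natDegree_derivative, ← Multiset.toFinset_card_eq_card_iff_nodup]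
  omega

theorem sum_inv_sub_sq_div_sum_roots_derivative (hq : q.Splits) (hnd : q.roots.Nodup) {z : ℝ}
    (hz : z ∈ q.roots) :
    (q.derivative.roots.map fun y =>
        ((y - z) ^ 2)⁻¹ / (q.roots.map fun z' => ((y - z') ^ 2)⁻¹).sum).sum =
      ((q.natDegree : ℝ) - 1) / q.natDegree := by
  classical
  obtain ⟨hq', hnd'⟩ := splits_and_nodup_roots_derivative hq hnd
  have hc : q.leadingCoeff ≠ 0 := leadingCoeff_ne_zero.2 (ne_zero_of_mem_roots hz)
  have hcard : #q.roots.toFinset = q.natDegree := by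
    rw [Multiset.toFinset_card_of_nodup hnd, splits_iff_card_roots.1 hq]
  have hst : derivative (nodal q.roots.toFinset id) =
      C (#q.roots.toFinset : ℝ) * nodal q.derivative.roots.toFinset id := by
    refine mul_left_cancel₀ (C_ne_zero.2 hc) ?_
    rw [← derivative_C_mul, ← hq.eq_C_leadingCoeff_mul_nodal hnd, ← mul_assoc, ← C_mul, hcard,
      ← leadingCoeff_derivative]
    exact hq'.eq_C_leadingCoeff_mul_nodal hnd'
  have h := sum_inv_sub_sq_div_sum_inv_sub_sq hst (Multiset.mem_toFinset.2 hz)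
  rw [hcard, sum_eq_multiset_sum, Multiset.toFinset_val, hnd'.dedup] at h
  simpa only [sum_eq_multiset_sum, Multiset.toFinset_val, hnd.dedup] using h

theorem splits_and_nodup_roots_iterate_derivative (hq : q.Splits) (hnd : q.roots.Nodup) (j : ℕ) :
    (derivative^[j] q).Splits ∧ (derivative^[j] q).roots.Nodup := by
  induction j with
  | zero => exact ⟨hq, hnd⟩
  | succ j ih =>
    rw [Function.iterate_succ_apply']
    exact splits_and_nodup_roots_derivative ih.1 ih.2

theorem natDegree_iterate_derivative_eq (q : ℝ[X]) (j : ℕ) :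
    (derivative^[j] q).natDegree = q.natDegree - j := by
  induction j with
  | zero => rfl
  | succ j ih => rw [Function.iterate_succ_apply', natDegree_derivative, ih, Nat.sub_sub]

theorem sum_Icc_inv_sub_sq_div_sum_sorted_roots (hq : q.Splits) (hnd : q.roots.Nodup) {n : ℕ}
    (hn : q.natDegree = n + 1) {xs ys : ℕ → ℝ}
    (hxs : ∀ a, xs a = (q.roots.sort (· ≤ ·)).getD (a - 1) 0)
    (hys : ∀ a, ys a = (q.derivative.roots.sort (· ≤ ·)).getD (a - 1) 0)
    {b : ℕ} (hb : b ∈ Icc 1 (n + 1)) :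
    ∑ c ∈ Icc 1 n, ((ys c - xs b) ^ 2)⁻¹ / ∑ b' ∈ Icc 1 (n + 1), ((ys c - xs b') ^ 2)⁻¹ =
      n / (n + 1) := by
  have hcard : Multiset.card q.roots = n + 1 := (splits_iff_card_roots.1 hq).trans hn
  have hcard' : Multiset.card q.derivative.roots = n := by
    rw [splits_iff_card_roots.1 (splits_and_nodup_roots_derivative hq hnd).1, natDegree_derivative,
      hn, Nat.add_sub_cancel]
  have hinner : ∀ y, ∑ b' ∈ Icc 1 (n + 1), ((y - xs b') ^ 2)⁻¹ =
      (q.roots.map fun z' => ((y - z') ^ 2)⁻¹).sum := fun y => by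
    simp only [hxs, ← hcard]
    exact Multiset.sum_Icc_getD_sort _ _ fun z' => ((y - z') ^ 2)⁻¹
  have hz : xs b ∈ q.roots := hxs b ▸ Multiset.getD_sort_mem _ _ (hcard ▸ hb)
  simp only [hinner, hys]
  conv_lhs => rw [← hcard']
  rw [Multiset.sum_Icc_getD_sort _ _ fun y =>
      ((y - xs b) ^ 2)⁻¹ / (q.roots.map fun z' => ((y - z') ^ 2)⁻¹).sum,
    sum_inv_sub_sq_div_sum_roots_derivative hq hnd hz, hn]
  push_cast
  ring

end Polynomial

theorem kernel_nonneg_and_le_div {N : ℕ} {α : ℕ → ℕ → ℕ → ℝ} {K : ℕ → ℕ → ℕ → ℕ → ℝ}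
    (hα_nonneg : ∀ ℓ, 1 ≤ ℓ → ℓ + 1 ≤ N → ∀ c ∈ Icc 1 ℓ, ∀ b ∈ Icc 1 (ℓ + 1), 0 ≤ α ℓ c b)
    (hα_sum : ∀ ℓ, 1 ≤ ℓ → ℓ + 1 ≤ N → ∀ b ∈ Icc 1 (ℓ + 1),
      ∑ c ∈ Icc 1 ℓ, α ℓ c b ≤ ℓ / (ℓ + 1))
    (hKdiag : ∀ k a b, K k k a b = if a = b then 1 else 0)
    (hKrec : ∀ k ℓ, k ≤ ℓ → ℓ + 1 ≤ N → ∀ a b,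
      K k (ℓ + 1) a b = ∑ c ∈ Icc 1 ℓ, K k ℓ a c * α ℓ c b)
    {k ℓ : ℕ} (hk : 1 ≤ k) (hkℓ : k ≤ ℓ) (hℓN : ℓ ≤ N) (a : ℕ) {b : ℕ} (hb : b ∈ Icc 1 ℓ) :
    0 ≤ K k ℓ a b ∧ K k ℓ a b ≤ k / ℓ := by
  induction ℓ, hkℓ using Nat.le_induction generalizing b with
  | base =>
    rw [hKdiag, div_self (by positivity)]
    split_ifs <;> norm_num
  | succ ℓ hkℓ ih =>
    have hℓ : 1 ≤ ℓ := hk.trans hkℓ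
    have hα := hα_nonneg ℓ hℓ hℓN
    rw [hKrec k ℓ hkℓ hℓN a b]
    constructor
    · exact sum_nonneg fun c hc => mul_nonneg (ih (by omega) hc).1 (hα c hc b hb)
    · calc ∑ c ∈ Icc 1 ℓ, K k ℓ a c * α ℓ c b
          ≤ ∑ c ∈ Icc 1 ℓ, k / ℓ * α ℓ c b :=
            sum_le_sum fun c hc => mul_le_mul_of_nonneg_right (ih (by omega) hc).2 (hα c hc b hb)
        _ = k / ℓ * ∑ c ∈ Icc 1 ℓ, α ℓ c b := (mul_sum ..).symm
        _ ≤ k / ℓ * (ℓ / (ℓ + 1)) := by gcongr; exact hα_sum ℓ hℓ hℓN b hb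
        _ = k / ↑(ℓ + 1) := by
          have : (ℓ : ℝ) ≠ 0 := by positivity
          push_cast
          field_simp

theorem stmt10_general (N : ℕ) (P : Polynomial ℝ)
    (hdeg : P.natDegree = N) (hcard : P.roots.card = N) (hnodup : P.roots.Nodup)
    (Pk : ℕ → Polynomial ℝ)
    (hPk : ∀ k, Pk k =
      Polynomial.C ((k.factorial : ℝ) / (N.factorial : ℝ)) * (Polynomial.derivative^[N - k] P))
    -- `x k a` is the `a`-th smallest root of `P_k` (1-indexed, junk value otherwise)
    (x : ℕ → ℕ → ℝ)
    (hx : ∀ k a, x k a = ((Pk k).roots.sort (· ≤ ·)).getD (a - 1) 0)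
    -- the stochastic matrices α^k
    (α : ℕ → ℕ → ℕ → ℝ)
    (hα : ∀ k, 1 ≤ k → k ≤ N - 1 → ∀ a, 1 ≤ a → a ≤ k → ∀ b, 1 ≤ b → b ≤ k + 1 →
      α k a b = ((x k a - x (k + 1) b) ^ 2)⁻¹ /
        ∑ b' ∈ Finset.Icc 1 (k + 1), ((x k a - x (k + 1) b') ^ 2)⁻¹)
    -- the diffusion kernels K^{k,ℓ}
    (K : ℕ → ℕ → ℕ → ℕ → ℝ)
    (hKdiag : ∀ k a b, K k k a b = if a = b then 1 else 0)
    (hKrec : ∀ k ℓ, k ≤ ℓ → ℓ + 1 ≤ N → ∀ a b,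
      K k (ℓ + 1) a b = ∑ c ∈ Finset.Icc 1 ℓ, K k ℓ a c * α ℓ c b) :
    ∀ k ℓ, 1 ≤ k → k ≤ ℓ → ℓ ≤ N → ∀ a, 1 ≤ a → a ≤ k → ∀ b, 1 ≤ b → b ≤ ℓ →
      0 ≤ K k ℓ a b ∧ K k ℓ a b ≤ (k : ℝ) / (ℓ : ℝ) := by
  have hP := splits_and_nodup_roots_iterate_derivative
    (splits_iff_card_roots.2 (hcard.trans hdeg.symm)) hnodup
  have hroots : ∀ k, (Pk k).roots = (derivative^[N - k] P).roots := fun k => by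
    rw [hPk, roots_C_mul _ (by positivity)]
  have hα_eq : ∀ ℓ, 1 ≤ ℓ → ℓ + 1 ≤ N → ∀ c ∈ Icc 1 ℓ, ∀ b ∈ Icc 1 (ℓ + 1), α ℓ c b =
      ((x ℓ c - x (ℓ + 1) b) ^ 2)⁻¹ / ∑ b' ∈ Icc 1 (ℓ + 1), ((x ℓ c - x (ℓ + 1) b') ^ 2)⁻¹ :=
    fun ℓ hℓ hℓN c hc b hb => by
      rw [mem_Icc] at hc hb
      exact hα ℓ hℓ (by omega) c hc.1 hc.2 b hb.1 hb.2
  have hα_sum : ∀ ℓ, 1 ≤ ℓ → ℓ + 1 ≤ N → ∀ b ∈ Icc 1 (ℓ + 1),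
      ∑ c ∈ Icc 1 ℓ, α ℓ c b = ℓ / (ℓ + 1) := fun ℓ hℓ hℓN b hb => by
    have hder : derivative (derivative^[N - (ℓ + 1)] P) = derivative^[N - ℓ] P := by
      rw [show N - ℓ = N - (ℓ + 1) + 1 by omega, Function.iterate_succ_apply']
    rw [← sum_Icc_inv_sub_sq_div_sum_sorted_roots (xs := x (ℓ + 1)) (ys := x ℓ)
      (hP (N - (ℓ + 1))).1 (hP _).2
      (by rw [natDegree_iterate_derivative_eq, hdeg]; omega) (fun a => by rw [hx, hroots])
      (fun a => by rw [hx, hroots, hder]) hb]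
    exact sum_congr rfl fun c hc => hα_eq ℓ hℓ hℓN c hc b hb
  intro k ℓ hk hkℓ hℓN a _ _ b hb₁ hb₂
  refine kernel_nonneg_and_le_div (fun ℓ hℓ hℓN c hc b hb => ?_)
    (fun ℓ hℓ hℓN b hb => (hα_sum ℓ hℓ hℓN b hb).le) hKdiag hKrec hk hkℓ hℓN a
    (mem_Icc.2 ⟨hb₁, hb₂⟩)
  rw [hα_eq ℓ hℓ hℓN c hc b hb]
  positivity

theorem stmt10 (N : ℕ) (hN : 1 ≤ N) (P : Polynomial ℝ) (hmonic : P.Monic)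
    (hdeg : P.natDegree = N) (hcard : P.roots.card = N) (hnodup : P.roots.Nodup)
    (Pk : ℕ → Polynomial ℝ)
    (hPk : ∀ k, Pk k =
      Polynomial.C ((k.factorial : ℝ) / (N.factorial : ℝ)) * (Polynomial.derivative^[N - k] P))
    -- `x k a` is the `a`-th smallest root of `P_k` (1-indexed, junk value otherwise)
    (x : ℕ → ℕ → ℝ)
    (hx : ∀ k a, x k a = ((Pk k).roots.sort (· ≤ ·)).getD (a - 1) 0)
    -- the stochastic matrices α^k
    (α : ℕ → ℕ → ℕ → ℝ)
    (hα : ∀ k, 1 ≤ k → k ≤ N - 1 → ∀ a, 1 ≤ a → a ≤ k → ∀ b, 1 ≤ b → b ≤ k + 1 →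
      α k a b = ((x k a - x (k + 1) b) ^ 2)⁻¹ /
        ∑ b' ∈ Finset.Icc 1 (k + 1), ((x k a - x (k + 1) b') ^ 2)⁻¹)
    -- the diffusion kernels K^{k,ℓ}
    (K : ℕ → ℕ → ℕ → ℕ → ℝ)
    (hKdiag : ∀ k a b, K k k a b = if a = b then 1 else 0)
    (hKrec : ∀ k ℓ, k ≤ ℓ → ℓ + 1 ≤ N → ∀ a b,
      K k (ℓ + 1) a b = ∑ c ∈ Finset.Icc 1 ℓ, K k ℓ a c * α ℓ c b) :
    ∀ k ℓ, 1 ≤ k → k ≤ ℓ → ℓ ≤ N → ∀ a, 1 ≤ a → a ≤ k → ∀ b, 1 ≤ b → b ≤ ℓ →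
      0 ≤ K k ℓ a b ∧ K k ℓ a b ≤ (k : ℝ) / (ℓ : ℝ) :=
  stmt10_general N P hdeg hcard hnodup Pk hPk x hx α hα K hKdiag hKrec
end

section
/- Let k ≥ 1 and let P be a monic real polynomial of degree k + 1 with k + 1 pairwise distinct real roots x_1, …, x_{k+1}; then P' has k pairwise distinct real roots. One has Σ_{y ∈ roots(P')} ( −2·P(y)/P''(y) ) = (2/(k+1)) · [ (1/(k+1))·Σ_{i=1}^{k+1} x_i² − ( (1/(k+1))·Σ_{i=1}^{k+1} x_i )² ]. -/
/-!
Write `n = k + 1`. The critical points `y` are simple roots of `P' = n ∏ (X - y_j)`, so Lagrange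
interpolation at them gives `∑ R(y) / P''(y) = coeff_{k-1}(R) / n` for every `R` of degree `< k`.
Take `R = P - (X - μ) P' / n` with `μ` the mean of the roots: it agrees with `P` at the critical
points, the choice of `μ` kills its coefficients of `X^n` and `X^k`, and its coefficient of
`X^{k-1}` is a combination of the first two elementary symmetric functions of the roots of `P`,
i.e. of `∑ x_i` and `∑ x_i²`.
-/

open Polynomial

namespace Multiset

variable {R : Type*}

theorem esymm_cons_succ [CommSemiring R] (a : R) (s : Multiset R) (k : ℕ) :
    (a ::ₘ s).esymm (k + 1) = a * s.esymm k + s.esymm (k + 1) := by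
  simp only [esymm, powersetCard_cons, map_add, sum_add, map_map, Function.comp_def, prod_cons,
    sum_map_mul_left]
  ring

theorem esymm_one [CommSemiring R] (s : Multiset R) : s.esymm 1 = s.sum := by
  simp [esymm, powersetCard_one, map_map]

theorem sum_map_sq [CommRing R] (s : Multiset R) :
    (s.map (· ^ 2)).sum = s.sum ^ 2 - 2 * s.esymm 2 := by
  induction s using Multiset.induction with
  | empty => simp [esymm, powersetCard_zero_right]
  | cons a s ih => rw [map_cons, sum_cons, ih, esymm_cons_succ, esymm_one, sum_cons]; ring

end Multiset

namespace Polynomial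

theorem card_roots_derivative_and_nodup_of_nodup {p : ℝ[X]}
    (hcard : p.roots.card = p.natDegree) (hnodup : p.roots.Nodup) :
    p.derivative.roots.card = p.natDegree - 1 ∧ p.derivative.roots.Nodup := by
  have hrolle := p.card_roots_toFinset_le_derivative
  rw [Multiset.toFinset_card_of_nodup hnodup, hcard] at hrolle
  have hdedup := Multiset.toFinset_card_le p.derivative.roots
  have hdeg := (card_roots' p.derivative).trans (natDegree_derivative_le p)
  exact ⟨by omega, Multiset.toFinset_card_eq_card_iff_nodup.mp (by omega)⟩

theorem coeff_X_add_C_mul_derivative {R : Type*} [CommSemiring R] (p : R[X]) (a : R) (j : ℕ) :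
    ((X + C a) * derivative p).coeff j = j * p.coeff j + a * (j + 1) * p.coeff (j + 1) := by
  rw [add_mul, coeff_add, coeff_C_mul, coeff_derivative]
  cases j with
  | zero => simp
  | succ j => rw [coeff_X_mul, coeff_derivative]; push_cast; ring

variable {F : Type*} [Field F]

theorem sum_roots_eval_div_eval_derivative {q r : F[X]} (hcard : q.roots.card = q.natDegree)
    (hnodup : q.roots.Nodup) (hr : r.degree < q.natDegree) :
    (q.roots.map fun y => r.eval y / q.derivative.eval y).sum
      = r.coeff (q.natDegree - 1) / q.leadingCoeff := by
  classical
  set s := q.roots.toFinset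
  have hs : s.val = q.roots := Multiset.dedup_eq_self.mpr hnodup
  have hs_card : s.card = q.natDegree := by rw [Finset.card, hs, hcard]
  have hq : C q.leadingCoeff * Lagrange.nodal s id = q := by
    rw [Lagrange.nodal_eq, Finset.prod_eq_multiset_prod, hs]
    exact C_leadingCoeff_mul_prod_multiset_X_sub_C hcard
  have hderiv : ∀ y ∈ s,
      q.derivative.eval y = q.leadingCoeff * ∏ z ∈ s.erase y, (y - z) := by
    intro y hy
    conv_lhs => rw [← hq]
    rw [derivative_C_mul, eval_mul, eval_C]
    exact congrArg _ ((Lagrange.eval_nodal_derivative_eval_node_eq (v := id) hy).trans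
      Lagrange.eval_nodal)
  rw [← hs_card, Lagrange.coeff_eq_sum (v := id) (Set.injOn_id _) (hs_card ▸ hr),
    Finset.sum_div, ← hs, ← Finset.sum_eq_multiset_sum]
  refine Finset.sum_congr rfl fun y hy => ?_
  rw [hderiv y hy, div_div, mul_comm]
  rfl

theorem sum_roots_derivative_eval_div_eval_derivative_derivative [CharZero F] {p : F[X]} {m : ℕ}
    (hmonic : p.Monic) (hdeg : p.natDegree = m + 2)
    (hcard : p.derivative.roots.card = p.derivative.natDegree)
    (hnodup : p.derivative.roots.Nodup) :
    (p.derivative.roots.map fun y => p.eval y / p.derivative.derivative.eval y).sum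
      = (2 * (m + 2) * p.coeff m - (m + 1) * p.coeff (m + 1) ^ 2) / (m + 2) ^ 3 := by
  have hn0 : (m + 2 : F) ≠ 0 := by exact_mod_cast (m + 1).succ_ne_zero
  set R := p - C (m + 2 : F)⁻¹ * ((X + C (p.coeff (m + 1) / (m + 2))) * derivative p)
  have hRcoeff (j : ℕ) :
      R.coeff j = p.coeff j - (m + 2 : F)⁻¹ *
        (j * p.coeff j + p.coeff (m + 1) / (m + 2) * (j + 1) * p.coeff (j + 1)) := by
    rw [coeff_sub, coeff_C_mul, coeff_X_add_C_mul_derivative]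
  have hlead : p.coeff (m + 2) = 1 := hdeg ▸ hmonic.coeff_natDegree
  have hhigh (j : ℕ) (hj : m + 2 < j) : p.coeff j = 0 :=
    coeff_eq_zero_of_natDegree_lt (hdeg ▸ hj)
  have hderiv_deg : p.derivative.natDegree = m + 1 := by rw [natDegree_derivative, hdeg]; rfl
  have hRdeg : R.degree < (m + 1 : ℕ) := by
    rw [degree_lt_iff_coeff_zero]
    intro j hj
    rw [hRcoeff]
    rcases (show j = m + 1 ∨ j = m + 2 ∨ m + 2 < j by omega) with rfl | rfl | hj
    · rw [hlead]; field_simp; push_cast; ring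
    · rw [hlead, hhigh (m + 2 + 1) (by omega)]; field_simp; push_cast; ring
    · rw [hhigh j hj, hhigh (j + 1) (by omega)]; ring
  have hReval (y : F) (hy : y ∈ p.derivative.roots) : R.eval y = p.eval y := by
    rw [eval_sub, eval_mul, eval_mul, (mem_roots'.mp hy).2, mul_zero, mul_zero, sub_zero]
  have hlc : p.derivative.leadingCoeff = m + 2 := by
    rw [leadingCoeff, hderiv_deg, coeff_derivative, hlead]; push_cast; ring
  rw [Multiset.map_congr rfl fun y hy => by rw [← hReval y hy],
    sum_roots_eval_div_eval_derivative hcard hnodup (hderiv_deg ▸ hRdeg), hderiv_deg, hlc,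
    Nat.add_sub_cancel, hRcoeff]
  field_simp
  ring

end Polynomial

theorem stmt11 (k : ℕ) (hk : 1 ≤ k) (P : Polynomial ℝ) (hmonic : P.Monic)
    (hdeg : P.natDegree = k + 1) (hcard : P.roots.card = k + 1) (hnodup : P.roots.Nodup) :
    ((Polynomial.derivative P).roots.card = k ∧ (Polynomial.derivative P).roots.Nodup) ∧
    ((Polynomial.derivative P).roots.map (fun y =>
        -2 * P.eval y / (Polynomial.derivative (Polynomial.derivative P)).eval y)).sum
      = 2 / ((k : ℝ) + 1) *
        ((1 / ((k : ℝ) + 1)) * (P.roots.map (fun x => x ^ 2)).sum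
          - ((1 / ((k : ℝ) + 1)) * P.roots.sum) ^ 2) := by
  obtain ⟨m, rfl⟩ : ∃ m, k = m + 1 := ⟨k - 1, by omega⟩
  rw [← hdeg] at hcard
  obtain ⟨hcard_crit, hnodup_crit⟩ := card_roots_derivative_and_nodup_of_nodup hcard hnodup
  refine ⟨⟨by rw [hcard_crit, hdeg]; rfl, hnodup_crit⟩, ?_⟩
  have hvieta₁ : P.coeff (m + 1) = -P.roots.sum := by
    rw [coeff_eq_esymm_roots_of_card hcard (by omega), hmonic.leadingCoeff, hdeg,
      show m + 1 + 1 - (m + 1) = 1 by omega, Multiset.esymm_one]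
    ring
  have hvieta₂ : P.coeff m = P.roots.esymm 2 := by
    rw [coeff_eq_esymm_roots_of_card hcard (by omega), hmonic.leadingCoeff, hdeg,
      show m + 1 + 1 - m = 2 by omega]
    ring
  simp_rw [mul_div_assoc]
  rw [Multiset.sum_map_mul_left,
    sum_roots_derivative_eval_div_eval_derivative_derivative hmonic hdeg
      (by rw [hcard_crit, natDegree_derivative]) hnodup_crit,
    hvieta₁, hvieta₂, Multiset.sum_map_sq]
  push_cast
  field_simp
  ring
end

section
/- Let m < N be natural numbers. Then the series over j = 0, 1, 2, … with terms T_j = [ (N+j)·(N+j−1)·⋯·(N+j−m) / (N+j+1) ] · [ ( (N−m)·(N−m+1)·⋯·(N−m+j−1) ) / ( (N+1)·(N+2)·⋯·(N+j) ) ]² (where the products in the second bracket each have j factors and equal 1 when j = 0, and the product in the first bracket has m + 1 factors) converges, with sum Σ_{j=0}^∞ T_j = (N−m)·(N−m+1)·⋯·N / (m+1), the numerator being the product of the m + 1 integers from N − m up to N. -/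
/-!
Write `x⁽ʲ⁾ = x (x + 1) ⋯ (x + j - 1)`, `a = N - m`, `b = N + 1 = a + (m + 1)` and
`r j = a⁽ʲ⁾ / b⁽ʲ⁾`. Splitting `a⁽ʲ⁺ᵐ⁺¹⁾` as `a⁽ʲ⁾ (a + j)⁽ᵐ⁺¹⁾` and as `a⁽ᵐ⁺¹⁾ b⁽ʲ⁾` gives
`r j · (N + j)(N + j - 1)⋯(N + j - m) = C := a⁽ᵐ⁺¹⁾` for every `j`, so the `j`-th term is
`C r j / (b + j)`. As `r j - r (j + 1) = (m + 1) r j / (b + j)`, the series telescopes to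
`C / (m + 1) · (r 0 - lim r) = C / (m + 1)`; the limit vanishes because
`r j ≤ (b - 1) / (b - 1 + j)`.
-/

open Finset Filter Topology

section Field

variable {K : Type*} [Field K]

def risingRatio (a b : K) (j : ℕ) : K := ∏ i ∈ range j, (a + i) / (b + i)

@[simp]
lemma risingRatio_zero (a b : K) : risingRatio a b 0 = 1 := prod_range_zero _

lemma risingRatio_succ (a b : K) (j : ℕ) :
    risingRatio a b (j + 1) = risingRatio a b j * ((a + j) / (b + j)) :=
  prod_range_succ _ j

lemma risingRatio_sub_succ (a b : K) (j : ℕ) (hb : b + j ≠ 0) :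
    risingRatio a b j - risingRatio a b (j + 1) = risingRatio a b j * (b - a) / (b + j) := by
  rw [risingRatio_succ]
  field_simp
  ring

lemma prod_range_sub_eq_prod_range_add {R : Type*} [CommRing R] (x : R) (m : ℕ) :
    ∏ i ∈ range (m + 1), (x - i) = ∏ i ∈ range (m + 1), (x - m + i) := by
  rw [← prod_range_reflect (fun i : ℕ => x - m + i)]
  refine prod_congr rfl fun i hi => ?_
  rw [Nat.add_sub_cancel, Nat.cast_sub (Nat.lt_succ_iff.mp (mem_range.mp hi))]
  ring

lemma mul_prod_range_add_one_add {R : Type*} [CommSemiring R] (x : R) (k : ℕ) :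
    x * ∏ i ∈ range k, (x + 1 + i) = (∏ i ∈ range k, (x + i)) * (x + k) := by
  have h := (prod_range_succ' (fun i : ℕ => x + i) k).symm.trans (prod_range_succ _ k)
  simp only [Nat.cast_add, Nat.cast_one, Nat.cast_zero, add_zero] at h
  rw [mul_comm, ← h]
  exact congrArg (· * x) (prod_congr rfl fun i _ => by ring)

lemma risingRatio_mul_prod_range (a : K) (k j : ℕ) (hak : ∀ i : ℕ, a + k + i ≠ 0) :
    risingRatio a (a + k) j * ∏ i ∈ range k, (a + j + i) = ∏ i ∈ range k, (a + i) := by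
  induction j with
  | zero => simp
  | succ j ih =>
    have hshift := mul_prod_range_add_one_add (a + j) k
    have hjk : a + k + j ≠ 0 := hak j
    rw [risingRatio_succ, ← ih]
    push_cast
    simp only [← add_assoc]
    field_simp
    linear_combination (risingRatio a (a + k) j) * hshift

lemma prod_div_mul_risingRatio_sq (a : K) (k j : ℕ) (hk : (k : K) ≠ 0)
    (hak : ∀ i : ℕ, a + k + i ≠ 0) :
    (∏ i ∈ range k, (a + j + i)) / (a + k + j) * risingRatio a (a + k) j ^ 2 =
      (∏ i ∈ range k, (a + i)) / k * (risingRatio a (a + k) j - risingRatio a (a + k) (j + 1)) := by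
  have hkey := risingRatio_mul_prod_range a k j hak
  have hj := hak j
  rw [risingRatio_sub_succ _ _ _ hj]
  field_simp
  linear_combination (k * risingRatio a (a + k) j) * hkey

end Field

section Real

lemma risingRatio_nonneg {a b : ℝ} (ha : 0 ≤ a) (hb : 0 ≤ b) (j : ℕ) : 0 ≤ risingRatio a b j :=
  prod_nonneg fun _ _ => by positivity

lemma risingRatio_antitone {a b : ℝ} (ha : 0 ≤ a) (hab : a ≤ b) : Antitone (risingRatio a b) := by
  refine antitone_nat_of_succ_le fun j => ?_
  rw [risingRatio_succ]
  refine mul_le_of_le_one_right (risingRatio_nonneg ha (ha.trans hab) j) ?_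
  exact div_le_one_of_le₀ (by linarith) (add_nonneg (ha.trans hab) j.cast_nonneg)

lemma risingRatio_le_risingRatio {a a' b : ℝ} (ha : 0 ≤ a) (haa' : a ≤ a') (hb : 0 ≤ b) (j : ℕ) :
    risingRatio a b j ≤ risingRatio a' b j :=
  prod_le_prod (fun _ _ => by positivity)
    fun _ _ => div_le_div_of_nonneg_right (by linarith) (by positivity)

lemma risingRatio_add_one {c : ℝ} (hc : 0 < c) (j : ℕ) :
    risingRatio c (c + 1) j = c / (c + j) := by
  have h := risingRatio_mul_prod_range c 1 j fun i => by positivity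
  simp only [Nat.cast_one, prod_range_one, Nat.cast_zero, add_zero] at h
  exact eq_div_of_mul_eq (by positivity) h

lemma tendsto_risingRatio_atTop {a b : ℝ} (ha : 0 < a) (hab : a + 1 ≤ b) :
    Tendsto (risingRatio a b) atTop (𝓝 0) := by
  have hc : 0 < b - 1 := by linarith
  have hlim : Tendsto (fun j : ℕ => (b - 1) / (b - 1 + j)) atTop (𝓝 0) :=
    tendsto_const_nhds.div_atTop (tendsto_atTop_add_const_left _ _ tendsto_natCast_atTop_atTop)
  refine tendsto_of_tendsto_of_tendsto_of_le_of_le tendsto_const_nhds hlim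
    (risingRatio_nonneg ha.le (by linarith)) fun j => ?_
  calc risingRatio a b j ≤ risingRatio (b - 1) b j :=
        risingRatio_le_risingRatio ha.le (by linarith) (by linarith) j
    _ = (b - 1) / (b - 1 + j) := by
        simpa only [sub_add_cancel] using risingRatio_add_one hc j

lemma hasSum_sub_succ_of_antitone {f : ℕ → ℝ} {l : ℝ} (hf : Antitone f)
    (hl : Tendsto f atTop (𝓝 l)) : HasSum (fun n => f n - f (n + 1)) (f 0 - l) := by
  rw [hasSum_iff_tendsto_nat_of_nonneg fun n => sub_nonneg.2 (hf n.le_succ)]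
  simpa only [sum_range_sub'] using hl.const_sub (f 0)

end Real

theorem stmt15 (N m : ℕ) (hm : m < N) :
    HasSum
      (fun j : ℕ =>
        ((∏ i ∈ Finset.range (m + 1), ((N : ℝ) + (j : ℝ) - (i : ℝ))) / ((N : ℝ) + (j : ℝ) + 1)) *
          ((∏ i ∈ Finset.range j, ((N : ℝ) - (m : ℝ) + (i : ℝ))) /
              (∏ i ∈ Finset.range j, ((N : ℝ) + 1 + (i : ℝ)))) ^ 2)
      ((∏ i ∈ Finset.range (m + 1), ((N : ℝ) - (m : ℝ) + (i : ℝ))) / ((m : ℝ) + 1)) := by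
  set a : ℝ := N - m
  have ha : 0 < a := sub_pos.2 (Nat.cast_lt.2 hm)
  have hb : (N : ℝ) + 1 = a + ((m + 1 : ℕ) : ℝ) := by push_cast; ring
  have hterm (j : ℕ) :
      (∏ i ∈ range (m + 1), ((N : ℝ) + j - i)) / (N + j + 1) *
          ((∏ i ∈ range j, (a + i)) / ∏ i ∈ range j, ((N : ℝ) + 1 + i)) ^ 2 =
        (∏ i ∈ range (m + 1), (a + i)) / ((m + 1 : ℕ) : ℝ) *
          (risingRatio a (N + 1) j - risingRatio a (N + 1) (j + 1)) := by
    rw [prod_range_sub_eq_prod_range_add, ← prod_div_distrib, hb,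
      ← prod_div_mul_risingRatio_sq a (m + 1) j (by positivity) fun i => by positivity]
    congr 2
    · exact prod_congr rfl fun i _ => by ring
    · push_cast at hb ⊢
      linarith
  have hab : a + 1 ≤ (N : ℝ) + 1 := by
    simpa only [a, add_le_add_iff_right] using sub_le_self (N : ℝ) m.cast_nonneg
  have hsum := (hasSum_sub_succ_of_antitone (risingRatio_antitone ha.le (by linarith))
    (tendsto_risingRatio_atTop ha hab)).mul_left
      ((∏ i ∈ range (m + 1), (a + i)) / ((m + 1 : ℕ) : ℝ))
  simp only [risingRatio_zero, sub_zero, mul_one, Nat.cast_add, Nat.cast_one] at hsum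
  simpa only [hterm, Nat.cast_add, Nat.cast_one] using hsum
end

section
/- Let f : ℝ → ℝ be twice differentiable with f''(t) = t·f(t) for all t ∈ ℝ, and fix a ∈ ℝ. Then for every y ∈ ℝ, the function G(y) = ((2a − y)/3)·f'(y+a)² + (1/3)·f'(y+a)·f(y+a) + ((y+a)·(y−2a)/3)·f(y+a)² is differentiable at y with G'(y) = y·f(y+a)². -/
section AiryEquation

variable {f : ℝ → ℝ}

theorem hasDerivAt_deriv_of_airy (hf' : Differentiable ℝ (deriv f))
    (hairy : ∀ t : ℝ, deriv (deriv f) t = t * f t) (t : ℝ) :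
    HasDerivAt (deriv f) (t * f t) t :=
  hairy t ▸ (hf' t).hasDerivAt

/-- After substituting `f'' = t f`, the `f'²` and `f' f` terms of the derivative cancel. -/
theorem hasDerivAt_airy_quadratic (hf : Differentiable ℝ f) (hf' : Differentiable ℝ (deriv f))
    (hairy : ∀ t : ℝ, deriv (deriv f) t = t * f t) (a t : ℝ) :
    HasDerivAt
      (fun t : ℝ => (3 * a - t) / 3 * deriv f t ^ 2 + 1 / 3 * deriv f t * f t
          + t * (t - 3 * a) / 3 * f t ^ 2)
      ((t - a) * f t ^ 2) t := by
  have hfd : HasDerivAt f (deriv f t) t := (hf t).hasDerivAt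
  have hfdd := hasDerivAt_deriv_of_airy hf' hairy t
  have hc₁ : HasDerivAt (fun t : ℝ => (3 * a - t) / 3) (-1 / 3) t := by
    simpa using ((hasDerivAt_id t).const_sub (3 * a)).div_const 3
  have hc₂ : HasDerivAt (fun t : ℝ => t * (t - 3 * a) / 3) ((2 * t - 3 * a) / 3) t :=
    (((hasDerivAt_id' t).mul ((hasDerivAt_id' t).sub_const (3 * a))).div_const 3).congr_deriv
      (by ring)
  exact (((hc₁.mul (hfdd.pow 2)).add (((hasDerivAt_const t (1 / 3 : ℝ)).mul hfdd).mul hfd)).add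
    (hc₂.mul (hfd.pow 2))).congr_deriv
      (by simp only [Pi.pow_apply, Pi.mul_apply, Nat.cast_ofNat]; ring)

end AiryEquation

theorem stmt16 (f : ℝ → ℝ) (hf : Differentiable ℝ f) (hf' : Differentiable ℝ (deriv f))
    (hairy : ∀ t : ℝ, deriv (deriv f) t = t * f t) (a : ℝ) (y : ℝ) :
    HasDerivAt
      (fun y : ℝ =>
        (2 * a - y) / 3 * (deriv f (y + a)) ^ 2
          + (1 / 3) * deriv f (y + a) * f (y + a)
          + (y + a) * (y - 2 * a) / 3 * (f (y + a)) ^ 2)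
      (y * (f (y + a)) ^ 2) y := by
  have hshifted := (hasDerivAt_airy_quadratic hf hf' hairy a (y + a)).comp_add_const y a
  exact (hshifted.congr_deriv (by ring)).congr_of_eventuallyEq
    (Filter.Eventually.of_forall fun x => by ring)
end

section
/- Let f : ℝ → ℝ be twice differentiable with f''(t) = t·f(t) for all t ∈ ℝ, and fix a, b ∈ ℝ with a ≠ b. Then for every y ∈ ℝ, the function G(y) = 2·f'(y+a)·f'(y+b) + (a − b)·( y·f'(y+a)·f(y+b) − y·f(y+a)·f'(y+b) ) − 2y·f(y+a)·f(y+b) − (a + b)·f(y+a)·f(y+b) + 2·( f(y+a)·f'(y+b) − f'(y+a)·f(y+b) )/(b − a) is differentiable at y with G'(y) = (a − b)²·y·f(y+a)·f(y+b). -/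
/-! Since `f'' = t f`, the shifted Wronskian `W(y) = f(y+a) f'(y+b) - f'(y+a) f(y+b)` satisfies
`W' = (b - a) f(y+a) f(y+b)`. The last term `2 W / (b - a)` of `G` therefore contributes
`2 f(y+a) f(y+b)`, which cancels the `-2 f(y+a) f(y+b)` left over
when the product rule is applied to the rest of `G`. -/

namespace Airy

variable {f f' : ℝ → ℝ}

theorem hasDerivAt_shiftedWronskian
    (hf : ∀ t, HasDerivAt f (f' t) t) (hf' : ∀ t, HasDerivAt f' (t * f t) t) (a b y : ℝ) :
    HasDerivAt (fun y => f (y + a) * f' (y + b) - f' (y + a) * f (y + b))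
      ((b - a) * f (y + a) * f (y + b)) y := by
  have := (((hf (y + a)).comp_add_const y a).fun_mul ((hf' (y + b)).comp_add_const y b)).fun_sub
    (((hf' (y + a)).comp_add_const y a).fun_mul ((hf (y + b)).comp_add_const y b))
  exact this.congr_deriv (by ring)

theorem hasDerivAt_polynomialPart
    (hf : ∀ t, HasDerivAt f (f' t) t) (hf' : ∀ t, HasDerivAt f' (t * f t) t) (a b y : ℝ) :
    HasDerivAt
      (fun y => 2 * f' (y + a) * f' (y + b)
        + (a - b) * (y * f' (y + a) * f (y + b) - y * f (y + a) * f' (y + b))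
        - 2 * y * f (y + a) * f (y + b) - (a + b) * f (y + a) * f (y + b))
      ((a - b) ^ 2 * y * f (y + a) * f (y + b) - 2 * f (y + a) * f (y + b)) y := by
  have hfa := (hf (y + a)).comp_add_const y a
  have hfb := (hf (y + b)).comp_add_const y b
  have hda := (hf' (y + a)).comp_add_const y a
  have hdb := (hf' (y + b)).comp_add_const y b
  have hid := hasDerivAt_id' y
  have := ((((hda.const_mul 2).fun_mul hdb).fun_add
      ((((hid.fun_mul hda).fun_mul hfb).fun_sub ((hid.fun_mul hfa).fun_mul hdb)).const_mul (a - b))).fun_sub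
      (((hid.const_mul 2).fun_mul hfa).fun_mul hfb)).fun_sub
    ((hfa.const_mul (a + b)).fun_mul hfb)
  exact this.congr_deriv (by ring)

end Airy

theorem stmt17 (f : ℝ → ℝ) (hf : Differentiable ℝ f) (hf' : Differentiable ℝ (deriv f))
    (hairy : ∀ t : ℝ, deriv (deriv f) t = t * f t) (a b : ℝ) (hab : a ≠ b) (y : ℝ) :
    HasDerivAt
      (fun y : ℝ =>
        2 * deriv f (y + a) * deriv f (y + b)
          + (a - b) * (y * deriv f (y + a) * f (y + b) - y * f (y + a) * deriv f (y + b))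
          - 2 * y * f (y + a) * f (y + b)
          - (a + b) * f (y + a) * f (y + b)
          + 2 * (f (y + a) * deriv f (y + b) - deriv f (y + a) * f (y + b)) / (b - a))
      ((a - b) ^ 2 * y * f (y + a) * f (y + b)) y := by
  have hderiv (t : ℝ) : HasDerivAt f (deriv f t) t := (hf t).hasDerivAt
  have hderiv' (t : ℝ) : HasDerivAt (deriv f) (t * f t) t := hairy t ▸ (hf' t).hasDerivAt
  have hW := ((Airy.hasDerivAt_shiftedWronskian hderiv hderiv' a b y).const_mul 2).div_const (b - a)
  refine ((Airy.hasDerivAt_polynomialPart hderiv hderiv' a b y).fun_add hW).congr_deriv ?_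
  have hba : b - a ≠ 0 := sub_ne_zero.mpr hab.symm
  field_simp
  ring
end

section
/- Let f : ℝ → ℝ be twice differentiable with f''(t) = t·f(t) for all t ∈ ℝ, and let α ∈ ℝ satisfy f(α) = 0. Assume that y·f(y)² → 0 and f'(y) → 0 as y → +∞. Then the integrals ∫_α^T f(y)² dy converge, as T → +∞, to f'(α)². -/
/-! The energy `E(y) = f'(y)² - y f(y)²` of a solution of the Airy equation `f'' = t f` has
derivative `-f(y)²`, so `∫_α^T f² = E(α) - E(T)`. At a zero `α` of `f` the energy is `f'(α)²`,
and the decay assumptions make `E(T) → 0`. -/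

open Filter Topology

noncomputable def airyEnergy (f : ℝ → ℝ) (y : ℝ) : ℝ :=
  deriv f y ^ 2 - y * f y ^ 2

theorem hasDerivAt_airyEnergy {f : ℝ → ℝ} {y : ℝ} (hf : DifferentiableAt ℝ f y)
    (hf' : DifferentiableAt ℝ (deriv f) y) (hairy : deriv (deriv f) y = y * f y) :
    HasDerivAt (airyEnergy f) (-f y ^ 2) y := by
  have hd2 : HasDerivAt (deriv f) (y * f y) y := hairy ▸ hf'.hasDerivAt
  refine ((hd2.pow 2).sub ((hasDerivAt_id y).mul (hf.hasDerivAt.pow 2))).congr_deriv ?_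
  simp only [id, Pi.pow_apply]
  ring

theorem integral_sq_eq_airyEnergy_sub {f : ℝ → ℝ} (hf : Differentiable ℝ f)
    (hf' : Differentiable ℝ (deriv f)) (hairy : ∀ t, deriv (deriv f) t = t * f t) (a b : ℝ) :
    ∫ y in a..b, f y ^ 2 = airyEnergy f a - airyEnergy f b := by
  have hFTC := intervalIntegral.integral_eq_sub_of_hasDerivAt
    (fun y _ => hasDerivAt_airyEnergy (hf y) (hf' y) (hairy y))
    ((hf.continuous.pow 2).neg.intervalIntegrable a b)
  rw [intervalIntegral.integral_neg] at hFTC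
  linarith

theorem tendsto_airyEnergy_atTop {f : ℝ → ℝ}
    (hyf : Tendsto (fun y => y * f y ^ 2) atTop (𝓝 0))
    (hf'lim : Tendsto (deriv f) atTop (𝓝 0)) :
    Tendsto (airyEnergy f) atTop (𝓝 0) := by
  show Tendsto (fun y => deriv f y ^ 2 - y * f y ^ 2) atTop (𝓝 0)
  simpa using (hf'lim.pow 2).sub hyf

theorem airyEnergy_eq_deriv_sq_of_eq_zero {f : ℝ → ℝ} {α : ℝ} (hα : f α = 0) :
    airyEnergy f α = deriv f α ^ 2 := by
  simp [airyEnergy, hα]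

theorem stmt18 (f : ℝ → ℝ) (hf : Differentiable ℝ f) (hf' : Differentiable ℝ (deriv f))
    (hairy : ∀ t : ℝ, deriv (deriv f) t = t * f t)
    (α : ℝ) (hα : f α = 0)
    (hyf : Tendsto (fun y : ℝ => y * (f y) ^ 2) atTop (nhds 0))
    (hf'lim : Tendsto (deriv f) atTop (nhds 0)) :
    Tendsto (fun T : ℝ => ∫ y in α..T, (f y) ^ 2) atTop (nhds ((deriv f α) ^ 2)) := by
  simp only [integral_sq_eq_airyEnergy_sub hf hf' hairy α, ← airyEnergy_eq_deriv_sq_of_eq_zero hα]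
  simpa using tendsto_const_nhds.sub (tendsto_airyEnergy_atTop hyf hf'lim)
end

section
/- Let f : ℝ → ℝ be twice differentiable with f''(t) = t·f(t) for all t ∈ ℝ, and let a, b ∈ ℝ with a ≠ b, f(a) = 0 and f(b) = 0. Assume that f(y) → 0 and f'(y) → 0 as y → +∞. Then the integrals ∫_0^T f(a + y)·f(b + y) dy converge to 0 as T → +∞. -/
/-!
The Wronskian `W(y) = f(a+y) f'(b+y) - f'(a+y) f(b+y)` of two shifts of a solution of the Airy
equation `f'' = t f` satisfies `W' = (b - a) f(a+y) f(b+y)`. Hence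
`(b - a) ∫_0^T f(a+y) f(b+y) dy = W(T) - W(0)`; here `W(0) = 0` because `f(a) = f(b) = 0`, and
`W(T) → 0` because `f` and `f'` vanish at infinity.
-/

open Filter Topology

noncomputable def shiftWronskian (f : ℝ → ℝ) (a b y : ℝ) : ℝ :=
  f (a + y) * deriv f (b + y) - deriv f (a + y) * f (b + y)

section

variable {f : ℝ → ℝ} {a b : ℝ}

theorem hasDerivAt_shiftWronskian (hf : Differentiable ℝ f) (hf' : Differentiable ℝ (deriv f))
    (hairy : ∀ t : ℝ, deriv (deriv f) t = t * f t) (y : ℝ) :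
    HasDerivAt (shiftWronskian f a b) ((b - a) * (f (a + y) * f (b + y))) y := by
  have hfa := (hf (a + y)).hasDerivAt.comp_const_add a y
  have hfb := (hf (b + y)).hasDerivAt.comp_const_add b y
  have hfa' := (hf' (a + y)).hasDerivAt.comp_const_add a y
  have hfb' := (hf' (b + y)).hasDerivAt.comp_const_add b y
  rw [hairy] at hfa' hfb'
  unfold shiftWronskian
  exact ((hfa.mul hfb').sub (hfa'.mul hfb)).congr_deriv (by ring)

theorem shiftWronskian_zero (ha : f a = 0) (hb : f b = 0) : shiftWronskian f a b 0 = 0 := by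
  simp [shiftWronskian, ha, hb]

theorem tendsto_shiftWronskian_atTop (hflim : Tendsto f atTop (𝓝 0))
    (hf'lim : Tendsto (deriv f) atTop (𝓝 0)) :
    Tendsto (shiftWronskian f a b) atTop (𝓝 0) := by
  have hshift (c : ℝ) : Tendsto (c + ·) atTop atTop := tendsto_atTop_add_const_left _ c tendsto_id
  unfold shiftWronskian
  simpa using ((hflim.comp (hshift a)).mul (hf'lim.comp (hshift b))).sub
    ((hf'lim.comp (hshift a)).mul (hflim.comp (hshift b)))

theorem sub_mul_integral_shift_mul_shift (hf : Differentiable ℝ f)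
    (hf' : Differentiable ℝ (deriv f)) (hairy : ∀ t : ℝ, deriv (deriv f) t = t * f t) (T : ℝ) :
    (b - a) * ∫ y in (0 : ℝ)..T, f (a + y) * f (b + y) =
      shiftWronskian f a b T - shiftWronskian f a b 0 := by
  have hcont : Continuous fun y => f (a + y) * f (b + y) := by
    have := hf.continuous
    fun_prop
  rw [← intervalIntegral.integral_const_mul]
  exact intervalIntegral.integral_eq_sub_of_hasDerivAt
    (fun y _ => hasDerivAt_shiftWronskian hf hf' hairy y)
    ((hcont.const_mul (b - a)).intervalIntegrable 0 T)

end

theorem stmt19 (f : ℝ → ℝ) (hf : Differentiable ℝ f) (hf' : Differentiable ℝ (deriv f))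
    (hairy : ∀ t : ℝ, deriv (deriv f) t = t * f t)
    (a b : ℝ) (hab : a ≠ b) (ha : f a = 0) (hb : f b = 0)
    (hflim : Tendsto f atTop (nhds 0))
    (hf'lim : Tendsto (deriv f) atTop (nhds 0)) :
    Tendsto (fun T : ℝ => ∫ y in (0 : ℝ)..T, f (a + y) * f (b + y)) atTop (nhds 0) := by
  have hba : b - a ≠ 0 := sub_ne_zero.2 hab.symm
  have hintegral (T : ℝ) :
      ∫ y in (0 : ℝ)..T, f (a + y) * f (b + y) = shiftWronskian f a b T / (b - a) := by
    rw [eq_div_iff hba, mul_comm, sub_mul_integral_shift_mul_shift hf hf' hairy,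
      shiftWronskian_zero ha hb, sub_zero]
  simp_rw [hintegral]
  simpa using (tendsto_shiftWronskian_atTop hflim hf'lim).div_const (b - a)
end
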